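/- arXiv:2404.05455 — 3 statements merged into one kernel-verified Lean document; each statement's English description precedes it below -/
import Mathlib

section
/- Let d ≥ 2 and ε > 0. For almost every α ∈ [0,1]^d (with respect to d-dimensional Lebesgue measure) there exists N₀ such that for all N ≥ N₀ the minimal gap of the sequence ({𝐚_n α}) = ({a_n^{(1)} α₁}, …, {a_n^{(d)} α_d}) satisfies δ_min^∞(α, N) ≥ 1 / ( 𝐂_N^{1/d} (log N)^{1/d} (log log N)^{1/d + ε} ). -/
open MeasureTheory Filter

/-- Distance from `x : ℝ` to the nearest integer. -/
noncomputable def nid (x : ℝ) : ℝ := |x - round x|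

/-- Sup-norm distance from `x : ℝ^d` to the nearest integer lattice point. -/
noncomputable def nidInf {d : ℕ} (x : Fin d → ℝ) : ℝ := ⨆ i, nid (x i)

/-- Minimal gap (sup-norm) of a sequence in `[0,1)^d` among indices `1 ≤ m ≠ n ≤ N`. -/
noncomputable def minGapInf {d : ℕ} (x : ℕ → Fin d → ℝ) (N : ℕ) : ℝ :=
  sInf {r | ∃ m n, 1 ≤ m ∧ m ≤ N ∧ 1 ≤ n ∧ n ≤ N ∧ m ≠ n ∧
    r = nidInf (fun i => x n i - x m i)}

/-- The set `(𝐀_N − 𝐀_N)^+` of differences with all coordinates positive. -/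
def diffSetVec {d : ℕ} (a : Fin d → ℕ → ℕ) (N : ℕ) : Finset (Fin d → ℤ) :=
  ((Finset.Icc 1 N ×ˢ Finset.Icc 1 N).image (fun p i => (a i p.1 : ℤ) - (a i p.2 : ℤ))).filter
    (fun c => ∀ i, 0 < c i)

lemma nid_nonneg (x : ℝ) : 0 ≤ nid x := abs_nonneg _

lemma nid_le (x : ℝ) (m : ℤ) : nid x ≤ |x - m| := by
  rcases eq_or_ne m (round x) with rfl | h
  · exact le_of_eq rfl
  · have h1 : |x - round x| ≤ 1 / 2 := abs_sub_round x
    have h2 : (1 : ℝ) ≤ |(round x : ℝ) - m| := by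
      have hne : round x - m ≠ 0 := sub_ne_zero.2 (Ne.symm h)
      have h0 : (1 : ℤ) ≤ |round x - m| := Int.one_le_abs hne
      have : ((1 : ℤ) : ℝ) ≤ ((|round x - m| : ℤ) : ℝ) := by exact_mod_cast h0
      simpa [Int.cast_abs] using this
    have h3 : |(round x : ℝ) - m| ≤ |(round x : ℝ) - x| + |x - m| := abs_sub_le _ _ _
    have h4 : |(round x : ℝ) - x| = |x - round x| := abs_sub_comm _ _
    unfold nid; linarith

lemma nid_neg (x : ℝ) : nid (-x) = nid x := by
  have key : ∀ y : ℝ, nid (-y) ≤ nid y := by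
    intro y
    have h := nid_le (-y) (-(round y))
    have : |-y - ((-(round y) : ℤ) : ℝ)| = |y - round y| := by
      push_cast
      rw [← abs_neg]
      ring_nf
    rw [this] at h
    exact h
  have h1 := key x
  have h2 := key (-x)
  rw [neg_neg] at h2
  exact le_antisymm h1 h2

lemma nid_add_int (x : ℝ) (m : ℤ) : nid (x + m) = nid x := by
  unfold nid
  rw [round_add_intCast]
  push_cast
  ring_nf

lemma nid_fract_sub (u v : ℝ) : nid (Int.fract u - Int.fract v) = nid (u - v) := by
  have h : Int.fract u - Int.fract v = (u - v) + ((⌊v⌋ - ⌊u⌋ : ℤ) : ℝ) := by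
    rw [Int.fract, Int.fract]; push_cast; ring
  rw [h, nid_add_int]

lemma nidInf_nonneg {d : ℕ} (x : Fin d → ℝ) : 0 ≤ nidInf x :=
  Real.iSup_nonneg fun i => nid_nonneg _

lemma nid_le_nidInf {d : ℕ} (x : Fin d → ℝ) (i : Fin d) : nid (x i) ≤ nidInf x :=
  le_ciSup (f := fun i => nid (x i)) (Set.Finite.bddAbove (Set.finite_range _)) i

def gapSet {d : ℕ} (x : ℕ → Fin d → ℝ) (N : ℕ) : Set ℝ :=
  {r | ∃ m n, 1 ≤ m ∧ m ≤ N ∧ 1 ≤ n ∧ n ≤ N ∧ m ≠ n ∧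
    r = nidInf (fun i => x n i - x m i)}

lemma gapSet_finite {d : ℕ} (x : ℕ → Fin d → ℝ) (N : ℕ) : (gapSet x N).Finite := by
  apply Set.Finite.subset (Set.Finite.image
    (f := fun p : ℕ × ℕ => nidInf (fun i => x p.2 i - x p.1 i))
    ((Set.finite_Icc 1 N).prod (Set.finite_Icc 1 N)))
  rintro r ⟨m, n, h1, h2, h3, h4, h5, rfl⟩
  exact ⟨(m, n), ⟨⟨h1, h2⟩, ⟨h3, h4⟩⟩, rfl⟩

lemma gapSet_nonempty {d : ℕ} (x : ℕ → Fin d → ℝ) {N : ℕ} (hN : 2 ≤ N) :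
    (gapSet x N).Nonempty :=
  ⟨_, 1, 2, le_refl 1, by omega, by omega, hN, by omega, rfl⟩

lemma minGapInf_nonneg {d : ℕ} (x : ℕ → Fin d → ℝ) (N : ℕ) : 0 ≤ minGapInf x N :=
  Real.sInf_nonneg (by rintro r ⟨m, n, h1, h2, h3, h4, h5, rfl⟩; exact nidInf_nonneg _)

lemma minGapInf_anti {d : ℕ} (x : ℕ → Fin d → ℝ) {N M : ℕ} (hN : 2 ≤ N) (hNM : N ≤ M) :
    minGapInf x M ≤ minGapInf x N := by
  apply csInf_le_csInf
  · exact ⟨0, by rintro r ⟨m, n, h1, h2, h3, h4, h5, rfl⟩; exact nidInf_nonneg _⟩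
  · exact gapSet_nonempty x hN
  · rintro r ⟨m, n, h1, h2, h3, h4, h5, rfl⟩
    exact ⟨m, n, h1, h2.trans hNM, h3, h4.trans hNM, h5, rfl⟩

lemma exists_of_minGapInf_lt {d : ℕ} {x : ℕ → Fin d → ℝ} {N : ℕ} {δ : ℝ} (hN : 2 ≤ N)
    (h : minGapInf x N < δ) :
    ∃ m n, 1 ≤ m ∧ m ≤ N ∧ 1 ≤ n ∧ n ≤ N ∧ m ≠ n ∧
      nidInf (fun i => x n i - x m i) < δ := by
  have hmem : minGapInf x N ∈ gapSet x N :=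
    (gapSet_nonempty x hN).csInf_mem (gapSet_finite x N)
  obtain ⟨m, n, h1, h2, h3, h4, h5, heq⟩ := hmem
  exact ⟨m, n, h1, h2, h3, h4, h5, heq ▸ h⟩

lemma diffSetVec_mono {d : ℕ} (a : Fin d → ℕ → ℕ) {N M : ℕ} (h : N ≤ M) :
    diffSetVec a N ⊆ diffSetVec a M :=
  Finset.filter_subset_filter _ (Finset.image_subset_image
    (Finset.product_subset_product (Finset.Icc_subset_Icc_right h) (Finset.Icc_subset_Icc_right h)))

lemma card_diffSetVec_le {d : ℕ} (a : Fin d → ℕ → ℕ) (N : ℕ) :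
    (diffSetVec a N).card ≤ N ^ 2 := by
  calc (diffSetVec a N).card ≤ _ := Finset.card_filter_le _ _
    _ ≤ (Finset.Icc 1 N ×ˢ Finset.Icc 1 N).card := Finset.card_image_le
    _ = N ^ 2 := by simp [Nat.card_Icc, sq]

lemma le_card_diffSetVec {d : ℕ} (hd : 0 < d) (a : Fin d → ℕ → ℕ) (ha : ∀ i, StrictMono (a i))
    (N : ℕ) : N - 1 ≤ (diffSetVec a N).card := by
  rcases Nat.lt_or_ge N 2 with h | h
  · omega
  have hcard : (Finset.Icc 2 N).card = N - 1 := by rw [Nat.card_Icc]; omega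
  rw [← hcard]
  apply Finset.card_le_card_of_injOn (fun n i => (a i n : ℤ) - (a i 1 : ℤ))
  · intro n hn
    rw [Finset.mem_coe, Finset.mem_Icc] at hn
    rw [Finset.mem_coe, diffSetVec, Finset.mem_filter]
    constructor
    · exact Finset.mem_image.2 ⟨(n, 1), Finset.mem_product.2
        ⟨Finset.mem_Icc.2 ⟨by omega, hn.2⟩, Finset.mem_Icc.2 ⟨le_refl 1, by omega⟩⟩, rfl⟩
    · intro i
      have := ha i (show 1 < n by omega)
      simp only [sub_pos]
      exact_mod_cast this
  · intro n hn n' hn' heq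
    have := congrFun heq ⟨0, hd⟩
    simp only [sub_left_inj, Int.natCast_inj] at this
    exact (ha ⟨0, hd⟩).injective this

lemma measure_bad_le (c : ℤ) (hc : 0 < c) (δ : ℝ) (hδ : 0 ≤ δ) :
    volume {x : ℝ | x ∈ Set.Icc (0 : ℝ) 1 ∧ nid ((c : ℝ) * x) < δ} ≤ ENNReal.ofReal (4 * δ) := by
  have hc' : (0 : ℝ) < c := by exact_mod_cast hc
  have hc1 : (1 : ℝ) ≤ c := by exact_mod_cast hc
  have hsub : {x : ℝ | x ∈ Set.Icc (0 : ℝ) 1 ∧ nid ((c : ℝ) * x) < δ} ⊆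
      ⋃ j ∈ Finset.range (c.toNat + 1), Metric.closedBall ((j : ℝ) / c) (δ / c) := by
    rintro x ⟨⟨hx0, hx1⟩, hnid⟩
    set j := round ((c : ℝ) * x) with hj
    have habs : |(c : ℝ) * x - j| ≤ 1 / 2 := abs_sub_round _
    have habs' := abs_le.1 habs
    have hcx0 : (0 : ℝ) ≤ (c : ℝ) * x := mul_nonneg hc'.le hx0
    have hcx1 : (c : ℝ) * x ≤ c := by nlinarith
    have hj0 : 0 ≤ j := by
      have h1 : (-1 : ℝ) < (j : ℝ) := by linarith [habs'.1]
      have : (-1 : ℤ) < j := by exact_mod_cast h1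
      omega
    have hjc : j ≤ c := by
      have h1 : (j : ℝ) < (c : ℝ) + 1 := by linarith [habs'.2]
      have : j < c + 1 := by exact_mod_cast h1
      omega
    apply Set.mem_biUnion (show j.toNat ∈ Finset.range (c.toNat + 1) by
      rw [Finset.mem_range]; omega)
    rw [Metric.mem_closedBall, Real.dist_eq]
    have hjr : ((j.toNat : ℕ) : ℝ) = (j : ℝ) := by exact_mod_cast Int.toNat_of_nonneg hj0
    rw [hjr]
    have heq : x - (j : ℝ) / c = ((c : ℝ) * x - j) / c := by field_simp
    rw [heq, abs_div, abs_of_pos hc']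
    have : |(c : ℝ) * x - j| ≤ δ := le_of_lt hnid
    gcongr
  calc volume {x : ℝ | x ∈ Set.Icc (0 : ℝ) 1 ∧ nid ((c : ℝ) * x) < δ}
      ≤ volume (⋃ j ∈ Finset.range (c.toNat + 1), Metric.closedBall ((j : ℝ) / c) (δ / c)) :=
        measure_mono hsub
    _ ≤ ∑ j ∈ Finset.range (c.toNat + 1), volume (Metric.closedBall ((j : ℝ) / c) (δ / c)) :=
        measure_biUnion_finset_le _ _
    _ = (c.toNat + 1 : ℕ) * ENNReal.ofReal (2 * (δ / c)) := by
        simp [Real.volume_closedBall, Finset.sum_const, Finset.card_range, nsmul_eq_mul]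
    _ ≤ ENNReal.ofReal (4 * δ) := by
        rw [← ENNReal.ofReal_natCast, ← ENNReal.ofReal_mul (by positivity)]
        apply ENNReal.ofReal_le_ofReal
        have h2 : ((c.toNat : ℕ) : ℝ) = (c : ℝ) := by exact_mod_cast Int.toNat_of_nonneg hc.le
        have hct : ((c.toNat + 1 : ℕ) : ℝ) = (c : ℝ) + 1 := by push_cast; rw [h2]
        rw [hct]
        have h5 : ((c : ℝ) + 1) * (2 * (δ / c)) = 2 * δ + 2 * (δ / c) := by field_simp
        have h6 : δ / c ≤ δ := div_le_self hδ hc1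
        linarith

lemma summable_bertrand {s : ℝ} (hs : 0 < s) :
    Summable (fun n : ℕ => 1 / (((n : ℝ) + 1) * Real.log ((n : ℝ) + 1) ^ (1 + s))) := by
  set f : ℕ → ℝ := fun n => 1 / (((n : ℝ) + 1) * Real.log ((n : ℝ) + 1) ^ (1 + s)) with hf
  have hnn : ∀ n, 0 ≤ f n := by
    intro n
    apply one_div_nonneg.2
    apply mul_nonneg (by positivity)
    exact Real.rpow_nonneg (Real.log_nonneg (by push_cast; linarith [Nat.cast_nonneg (α := ℝ) n])) _
  have hanti : ∀ ⦃m n : ℕ⦄, 1 ≤ m → m ≤ n → f n ≤ f m := by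
    intro m n hm hmn
    have hm2 : (2 : ℝ) ≤ (m : ℝ) + 1 := by
      have : (1 : ℝ) ≤ (m : ℝ) := by exact_mod_cast hm
      linarith
    have hlogm : 0 < Real.log ((m : ℝ) + 1) := Real.log_pos (by linarith)
    have hmn' : (m : ℝ) + 1 ≤ (n : ℝ) + 1 := by
      have : (m : ℝ) ≤ n := by exact_mod_cast hmn
      linarith
    apply one_div_le_one_div_of_le
    · exact mul_pos (by linarith) (Real.rpow_pos_of_pos hlogm _)
    · apply mul_le_mul hmn'
      · exact Real.rpow_le_rpow hlogm.le (Real.log_le_log (by linarith) hmn') (by linarith)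
      · exact Real.rpow_nonneg hlogm.le _
      · linarith
  apply (summable_condensed_iff_of_nonneg hnn hanti).1
  apply (summable_nat_add_iff 1).1
  have hsum : Summable (fun n : ℕ =>
      (Real.log 2 ^ (1 + s))⁻¹ * (((n + 1 : ℕ) : ℝ) ^ (1 + s))⁻¹) := by
    apply Summable.mul_left
    exact (summable_nat_add_iff 1).2 (Real.summable_nat_rpow_inv.2 (by linarith))
  apply Summable.of_nonneg_of_le _ _ hsum
  · intro n
    have := hnn (2 ^ (n + 1))
    positivity
  · intro n
    set m : ℕ := n + 1 with hmdef
    have hm1 : 1 ≤ m := Nat.le_add_left 1 n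
    have h2m : (1 : ℝ) ≤ (2 : ℝ) ^ m := one_le_pow₀ (by norm_num)
    have hlog2 : 0 < Real.log 2 := Real.log_pos (by norm_num)
    have hmlog : 0 < (m : ℝ) * Real.log 2 := by
      apply mul_pos _ hlog2
      exact_mod_cast hm1
    have hcast : ((2 ^ m : ℕ) : ℝ) = (2 : ℝ) ^ m := by push_cast; ring
    have hlogge : (m : ℝ) * Real.log 2 ≤ Real.log (((2 ^ m : ℕ) : ℝ) + 1) := by
      rw [hcast]
      calc (m : ℝ) * Real.log 2 = Real.log ((2 : ℝ) ^ m) := (Real.log_pow (n := m) (x := 2)).symm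
        _ ≤ Real.log ((2 : ℝ) ^ m + 1) := Real.log_le_log (by positivity) (by linarith)
    have hfle : f (2 ^ m) ≤ 1 / ((2 : ℝ) ^ m * ((m : ℝ) * Real.log 2) ^ (1 + s)) := by
      apply one_div_le_one_div_of_le
      · exact mul_pos (by positivity) (Real.rpow_pos_of_pos hmlog _)
      · apply mul_le_mul
        · rw [hcast]; linarith
        · exact Real.rpow_le_rpow hmlog.le hlogge (by linarith)
        · exact Real.rpow_nonneg hmlog.le _
        · positivity
    calc (2 : ℝ) ^ m * f (2 ^ m)
        ≤ (2 : ℝ) ^ m * (1 / ((2 : ℝ) ^ m * ((m : ℝ) * Real.log 2) ^ (1 + s))) := by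
          apply mul_le_mul_of_nonneg_left hfle (by positivity)
      _ = (((m : ℝ) * Real.log 2) ^ (1 + s))⁻¹ := by
          field_simp
      _ = (Real.log 2 ^ (1 + s))⁻¹ * (((m : ℕ) : ℝ) ^ (1 + s))⁻¹ := by
          rw [Real.mul_rpow (Nat.cast_nonneg m) hlog2.le, mul_inv, mul_comm]
      _ = (Real.log 2 ^ (1 + s))⁻¹ * (((n + 1 : ℕ) : ℝ) ^ (1 + s))⁻¹ := by rw [hmdef]

lemma measure_badVec_le {d : ℕ} (c : Fin d → ℤ) (hc : ∀ i, 0 < c i) {δ : ℝ} (hδ : 0 ≤ δ) :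
    volume (Set.univ.pi (fun i : Fin d => {x : ℝ | x ∈ Set.Icc (0 : ℝ) 1 ∧ nid ((c i : ℝ) * x) < δ}))
      ≤ ENNReal.ofReal ((4 * δ) ^ d) := by
  rw [volume_pi_pi]
  calc ∏ i, volume {x : ℝ | x ∈ Set.Icc (0 : ℝ) 1 ∧ nid ((c i : ℝ) * x) < δ}
      ≤ ∏ _i : Fin d, ENNReal.ofReal (4 * δ) :=
        Finset.prod_le_prod' fun i _ => measure_bad_le (c i) (hc i) δ hδ
    _ = ENNReal.ofReal (4 * δ) ^ d := by simp
    _ = ENNReal.ofReal ((4 * δ) ^ d) := (ENNReal.ofReal_pow (by positivity) d).symm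

lemma measure_event_le {d : ℕ} (a : Fin d → ℕ → ℕ) (ha : ∀ i, StrictMono (a i))
    {M : ℕ} (hM : 2 ≤ M) {δ : ℝ} (hδ : 0 ≤ δ) :
    volume ({α : Fin d → ℝ | minGapInf (fun n i => Int.fract ((a i n : ℝ) * α i)) M < δ}
        ∩ Set.univ.pi fun _ : Fin d => Set.Icc (0 : ℝ) 1)
      ≤ (diffSetVec a M).card * ENNReal.ofReal ((4 * δ) ^ d) := by
  have hsub : {α : Fin d → ℝ | minGapInf (fun n i => Int.fract ((a i n : ℝ) * α i)) M < δ}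
        ∩ (Set.univ.pi fun _ : Fin d => Set.Icc (0 : ℝ) 1) ⊆
      ⋃ c ∈ diffSetVec a M, Set.univ.pi
        (fun i : Fin d => {x : ℝ | x ∈ Set.Icc (0 : ℝ) 1 ∧ nid ((c i : ℝ) * x) < δ}) := by
    rintro α ⟨hgap, hbox⟩
    simp only [Set.mem_setOf_eq] at hgap
    obtain ⟨m, n, hm1, hmM, hn1, hnM, hmn, hlt⟩ := exists_of_minGapInf_lt hM hgap
    -- order the pair
    obtain ⟨p, q, hp1, hpM, hq1, hqM, hpq, hkey⟩ :
        ∃ p q, 1 ≤ p ∧ p ≤ M ∧ 1 ≤ q ∧ q ≤ M ∧ p < q ∧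
          ∀ i, nid (((a i q : ℤ) - (a i p : ℤ) : ℤ) * α i : ℝ) < δ := by
      have hcomp : ∀ i, nid (Int.fract ((a i n : ℝ) * α i) - Int.fract ((a i m : ℝ) * α i)) < δ :=
        fun i => lt_of_le_of_lt (nid_le_nidInf (fun i => Int.fract ((a i n : ℝ) * α i) - Int.fract ((a i m : ℝ) * α i)) i) hlt
      rcases Nat.lt_or_ge m n with hlt' | hge
      · refine ⟨m, n, hm1, hmM, hn1, hnM, hlt', fun i => ?_⟩
        have := hcomp i
        rw [nid_fract_sub] at this
        have heq : ((a i n : ℝ)) * α i - ((a i m : ℝ)) * α i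
            = (((a i n : ℤ) - (a i m : ℤ) : ℤ) : ℝ) * α i := by push_cast; ring
        rwa [heq] at this
      · have hlt' : n < m := by omega
        refine ⟨n, m, hn1, hnM, hm1, hmM, hlt', fun i => ?_⟩
        have := hcomp i
        rw [nid_fract_sub] at this
        have heq : ((a i n : ℝ)) * α i - ((a i m : ℝ)) * α i
            = -((((a i m : ℤ) - (a i n : ℤ) : ℤ) : ℝ) * α i) := by push_cast; ring
        rwa [heq, nid_neg] at this
    set c : Fin d → ℤ := fun i => (a i q : ℤ) - (a i p : ℤ) with hcdef
    have hcmem : c ∈ diffSetVec a M := by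
      rw [diffSetVec, Finset.mem_filter]
      refine ⟨Finset.mem_image.2 ⟨(q, p), Finset.mem_product.2
        ⟨Finset.mem_Icc.2 ⟨hq1, hqM⟩, Finset.mem_Icc.2 ⟨hp1, hpM⟩⟩, rfl⟩, fun i => ?_⟩
      simp only [hcdef, sub_pos]
      exact_mod_cast ha i hpq
    apply Set.mem_biUnion hcmem
    rw [Set.mem_univ_pi]
    intro i
    exact ⟨hbox i (Set.mem_univ i), hkey i⟩
  calc volume _ ≤ volume (⋃ c ∈ diffSetVec a M, Set.univ.pi
        (fun i : Fin d => {x : ℝ | x ∈ Set.Icc (0 : ℝ) 1 ∧ nid ((c i : ℝ) * x) < δ})) :=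
        measure_mono hsub
    _ ≤ ∑ c ∈ diffSetVec a M, volume (Set.univ.pi
        (fun i : Fin d => {x : ℝ | x ∈ Set.Icc (0 : ℝ) 1 ∧ nid ((c i : ℝ) * x) < δ})) :=
        measure_biUnion_finset_le _ _
    _ ≤ ∑ _c ∈ diffSetVec a M, ENNReal.ofReal ((4 * δ) ^ d) := by
        apply Finset.sum_le_sum
        intro c hcmem
        have hcpos : ∀ i, 0 < c i := (Finset.mem_filter.1 hcmem).2
        exact measure_badVec_le c hcpos hδ
    _ = (diffSetVec a M).card * ENNReal.ofReal ((4 * δ) ^ d) := by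
        rw [Finset.sum_const, nsmul_eq_mul]

set_option maxHeartbeats 2000000 in
theorem stmt0 (d : ℕ) (hd : 2 ≤ d) (ε : ℝ) (hε : 0 < ε)
    (a : Fin d → ℕ → ℕ) (ha : ∀ i, StrictMono (a i)) (hapos : ∀ i n, 0 < a i n) :
    ∀ᵐ α ∂(volume.restrict (Set.univ.pi fun _ : Fin d => Set.Icc (0 : ℝ) 1)),
      ∃ N₀ : ℕ, ∀ N ≥ N₀,
        minGapInf (fun n i => Int.fract ((a i n : ℝ) * α i)) N ≥
          1 / (((diffSetVec a N).card : ℝ) ^ ((1 : ℝ) / d) *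
            (Real.log N) ^ ((1 : ℝ) / d) *
            (Real.log (Real.log N)) ^ ((1 : ℝ) / d + ε)) := by
  have hd0 : 0 < d := by omega
  have hdR : (0 : ℝ) < d := by exact_mod_cast hd0
  set s : ℝ := (d : ℝ) * ε with hsdef
  have hs : 0 < s := mul_pos hdR hε
  set box : Set (Fin d → ℝ) := Set.univ.pi fun _ : Fin d => Set.Icc (0 : ℝ) 1 with hboxdef
  have hbox_meas : MeasurableSet box := MeasurableSet.univ_pi fun _ => measurableSet_Icc
  -- the subsequence Nk
  have hex : ∀ k : ℕ, ∃ N, 2 ^ k ≤ (diffSetVec a N).card := by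
    intro k
    refine ⟨2 ^ k + 1, ?_⟩
    have := le_card_diffSetVec hd0 a ha (2 ^ k + 1)
    omega
  set Nk : ℕ → ℕ := fun k => Nat.find (hex k) with hNkdef
  have hNk_spec : ∀ k, 2 ^ k ≤ (diffSetVec a (Nk k)).card := fun k => Nat.find_spec (hex k)
  have hNk_min : ∀ k N, N < Nk k → (diffSetVec a N).card < 2 ^ k := by
    intro k N h
    have := Nat.find_min (hex k) h
    omega
  have hNk_ge : ∀ k, 2 ^ (k / 2) ≤ Nk k := by
    intro k
    by_contra h
    push_neg at h
    have h1 := card_diffSetVec_le a (Nk k)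
    have h2 : Nk k ^ 2 < (2 ^ (k / 2)) ^ 2 := Nat.pow_lt_pow_left h (by norm_num)
    have h3 : (2 ^ (k / 2)) ^ 2 ≤ 2 ^ k := by
      rw [← pow_mul]
      exact Nat.pow_le_pow_right (by norm_num) (by omega)
    have := hNk_spec k
    omega
  have hNk_mono : ∀ {k k' : ℕ}, k ≤ k' → Nk k ≤ Nk k' := by
    intro k k' hkk'
    exact Nat.find_min' (hex k) (le_trans (Nat.pow_le_pow_right (by norm_num) hkk') (hNk_spec k'))
  -- threshold K
  obtain ⟨K₀, hK₀⟩ : ∃ K₀ : ℕ, ∀ k ≥ K₀,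
      2 * (-Real.log (Real.log 2 / 6)) ≤ Real.log ((k : ℝ) + 1) := by
    have htend : Tendsto (fun k : ℕ => Real.log ((k : ℝ) + 1)) atTop atTop :=
      Real.tendsto_log_atTop.comp (tendsto_atTop_add_const_right _ 1 tendsto_natCast_atTop_atTop)
    exact eventually_atTop.1 (htend.eventually_ge_atTop _)
  set K : ℕ := max K₀ 100 with hKdef
  -- per-k quantities
  set Y : ℕ → ℝ := fun k => Real.log (Nk k) with hYdef
  set Z : ℕ → ℝ := fun k => Real.log (Y k) with hZdef
  set δstar : ℕ → ℝ := fun k =>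
    1 / (((2 : ℝ) ^ k) ^ ((1 : ℝ) / d) * (Y k) ^ ((1 : ℝ) / d) * (Z k) ^ ((1 : ℝ) / d + ε))
    with hδdef
  have hlog2 : 0 < Real.log 2 := Real.log_pos (by norm_num)
  -- facts for k ≥ K
  have hNk16 : ∀ k, K ≤ k → 16 ≤ Nk k := by
    intro k hk
    have h8 : 8 ≤ k := le_trans (by omega : 8 ≤ K) hk
    have : (2 : ℕ) ^ 4 ≤ 2 ^ (k / 2) := Nat.pow_le_pow_right (by norm_num) (by omega)
    have := hNk_ge k
    omega
  have hY1 : ∀ k, K ≤ k → 1 < Y k := by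
    intro k hk
    have h16 : (16 : ℝ) ≤ (Nk k : ℝ) := by exact_mod_cast hNk16 k hk
    have : (1 : ℝ) < Real.log 16 := by
      rw [Real.lt_log_iff_exp_lt (by norm_num)]
      calc Real.exp 1 < 2.7182818286 := Real.exp_one_lt_d9
        _ < 16 := by norm_num
    calc (1 : ℝ) < Real.log 16 := this
      _ ≤ Y k := Real.log_le_log (by norm_num) h16
  have hYpos : ∀ k, K ≤ k → 0 < Y k := fun k hk => lt_trans one_pos (hY1 k hk)
  have hZpos : ∀ k, K ≤ k → 0 < Z k := fun k hk => Real.log_pos (hY1 k hk)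
  have hδpos : ∀ k, K ≤ k → 0 < δstar k := by
    intro k hk
    apply div_pos one_pos
    apply mul_pos (mul_pos _ _) _
    · exact Real.rpow_pos_of_pos (by positivity) _
    · exact Real.rpow_pos_of_pos (hYpos k hk) _
    · exact Real.rpow_pos_of_pos (hZpos k hk) _
  have hYlb : ∀ k, K ≤ k → ((k : ℝ) + 1) * (Real.log 2 / 6) ≤ Y k := by
    intro k hk
    have hk2 : 2 ≤ k := le_trans (by omega : 2 ≤ K) hk
    have h1 : (((2 ^ (k / 2) : ℕ) : ℝ)) ≤ (Nk k : ℝ) := by exact_mod_cast hNk_ge k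
    have h2 : Real.log (((2 ^ (k / 2) : ℕ) : ℝ)) ≤ Y k :=
      Real.log_le_log (by positivity) h1
    have h3 : Real.log (((2 ^ (k / 2) : ℕ) : ℝ)) = ((k / 2 : ℕ) : ℝ) * Real.log 2 := by
      have : ((2 ^ (k / 2) : ℕ) : ℝ) = (2 : ℝ) ^ (k / 2) := by push_cast; ring
      rw [this, Real.log_pow]
    have h4 : ((k / 2 : ℕ) : ℝ) ≥ ((k : ℝ) - 1) / 2 := by
      have hnat : k ≤ 2 * (k / 2) + 1 := by omega
      have h5 : (k : ℝ) ≤ 2 * ((k / 2 : ℕ) : ℝ) + 1 := by exact_mod_cast hnat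
      linarith
    have h6 : ((k : ℝ) - 1) / 2 ≥ ((k : ℝ) + 1) / 6 := by
      have : (2 : ℝ) ≤ k := by exact_mod_cast hk2
      linarith
    calc ((k : ℝ) + 1) * (Real.log 2 / 6) = ((k : ℝ) + 1) / 6 * Real.log 2 := by ring
      _ ≤ ((k : ℝ) - 1) / 2 * Real.log 2 := by nlinarith
      _ ≤ ((k / 2 : ℕ) : ℝ) * Real.log 2 := by nlinarith
      _ = Real.log (((2 ^ (k / 2) : ℕ) : ℝ)) := h3.symm
      _ ≤ Y k := h2
  have hlogk : ∀ k, K ≤ k → 0 < Real.log ((k : ℝ) + 1) := by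
    intro k hk
    apply Real.log_pos
    have : (100 : ℝ) ≤ (k : ℝ) := by exact_mod_cast le_trans (by omega : 100 ≤ K) hk
    linarith
  have hZlb : ∀ k, K ≤ k → (1 / 2) * Real.log ((k : ℝ) + 1) ≤ Z k := by
    intro k hk
    have hc1 : (0 : ℝ) < Real.log 2 / 6 := by linarith
    have hkpos : (0 : ℝ) < (k : ℝ) + 1 := by positivity
    have h1 : Real.log (((k : ℝ) + 1) * (Real.log 2 / 6)) ≤ Z k :=
      Real.log_le_log (by positivity) (hYlb k hk)
    have h2 : Real.log (((k : ℝ) + 1) * (Real.log 2 / 6)) =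
        Real.log ((k : ℝ) + 1) + Real.log (Real.log 2 / 6) :=
      Real.log_mul (by positivity) (ne_of_gt hc1)
    have h3 := hK₀ k (le_trans (le_max_left _ _) hk)
    linarith
  -- events
  set M : ℕ → ℕ := fun k => Nk (k + 1) - 1 with hMdef
  set E : ℕ → Set (Fin d → ℝ) := fun k =>
    {α | minGapInf (fun n i => Int.fract ((a i n : ℝ) * α i)) (M k) < δstar k} with hEdef
  have hM2 : ∀ k, K ≤ k → 2 ≤ M k := by
    intro k hk
    have : (2 : ℕ) ^ 2 ≤ 2 ^ ((k + 1) / 2) := Nat.pow_le_pow_right (by norm_num)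
      (by have : 100 ≤ k := le_trans (by omega) hk; omega)
    have := hNk_ge (k + 1)
    show 2 ≤ Nk (k + 1) - 1
    omega
  -- measure bound
  set f : ℕ → ℝ := fun n => 1 / (((n : ℝ) + 1) * Real.log ((n : ℝ) + 1) ^ (1 + s)) with hfdef
  set c₃ : ℝ := (Real.log 2 / 6) * (1 / 2 : ℝ) ^ ((1 : ℝ) + s) with hc₃def
  have hc₃pos : 0 < c₃ := mul_pos (by linarith) (Real.rpow_pos_of_pos (by norm_num) _)
  set A : ℝ := 2 * 4 ^ d / c₃ with hAdef
  have hApos : 0 < A := div_pos (by positivity) hc₃pos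
  have bnd : ∀ k, K ≤ k →
      (volume.restrict box) (E k) ≤ ENNReal.ofReal (A * f k) := by
    intro k hk
    have hδnn : 0 ≤ δstar k := (hδpos k hk).le
    have hcard : (diffSetVec a (M k)).card < 2 ^ (k + 1) := by
      apply hNk_min (k + 1)
      have hp : 1 ≤ 2 ^ ((k + 1) / 2) := Nat.one_le_two_pow
      have := hNk_ge (k + 1)
      show Nk (k + 1) - 1 < Nk (k + 1)
      omega
    calc (volume.restrict box) (E k) = volume (E k ∩ box) :=
          Measure.restrict_apply' hbox_meas
      _ ≤ (diffSetVec a (M k)).card * ENNReal.ofReal ((4 * δstar k) ^ d) :=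
          measure_event_le a ha (hM2 k hk) hδnn
      _ ≤ ENNReal.ofReal ((2 : ℝ) ^ (k + 1) * (4 * δstar k) ^ d) := by
          rw [← ENNReal.ofReal_natCast ((diffSetVec a (M k)).card),
            ← ENNReal.ofReal_mul (by positivity)]
          apply ENNReal.ofReal_le_ofReal
          apply mul_le_mul_of_nonneg_right _ (by positivity)
          calc ((diffSetVec a (M k)).card : ℝ) ≤ ((2 ^ (k + 1) : ℕ) : ℝ) := by
                exact_mod_cast hcard.le
            _ = (2 : ℝ) ^ (k + 1) := by push_cast; ring
      _ ≤ ENNReal.ofReal (A * f k) := by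
          apply ENNReal.ofReal_le_ofReal
          -- compute (δstar k)^d
          have hdne : (d : ℝ) ≠ 0 := ne_of_gt hdR
          have hXd : ((((2 : ℝ) ^ k) ^ ((1 : ℝ) / d)) : ℝ) ^ d = (2 : ℝ) ^ k := by
            rw [← Real.rpow_natCast (((2 : ℝ) ^ k) ^ ((1 : ℝ) / d)) d,
              ← Real.rpow_mul (by positivity), one_div, inv_mul_cancel₀ hdne, Real.rpow_one]
          have hYd : ((Y k) ^ ((1 : ℝ) / d)) ^ d = Y k := by
            rw [← Real.rpow_natCast ((Y k) ^ ((1 : ℝ) / d)) d,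
              ← Real.rpow_mul (hYpos k hk).le, one_div, inv_mul_cancel₀ hdne, Real.rpow_one]
          have hexp : ((1 : ℝ) / d + ε) * d = 1 + s := by
            field_simp
            ring
          have hZd : ((Z k) ^ ((1 : ℝ) / d + ε)) ^ d = (Z k) ^ ((1 : ℝ) + s) := by
            rw [← Real.rpow_natCast ((Z k) ^ ((1 : ℝ) / d + ε)) d,
              ← Real.rpow_mul (hZpos k hk).le, hexp]
          have hδd : (δstar k) ^ d = 1 / ((2 : ℝ) ^ k * Y k * (Z k) ^ ((1 : ℝ) + s)) := by
            rw [hδdef]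
            simp only [div_pow, one_pow, mul_pow, hXd, hYd, hZd]
          have hT : (0 : ℝ) < ((k : ℝ) + 1) * Real.log ((k : ℝ) + 1) ^ (1 + s) := by
            apply mul_pos (by positivity)
            exact Real.rpow_pos_of_pos (hlogk k hk) _
          have hZineq : ((1 / 2 : ℝ) * Real.log ((k : ℝ) + 1)) ^ ((1 : ℝ) + s)
              ≤ (Z k) ^ ((1 : ℝ) + s) :=
            Real.rpow_le_rpow (mul_nonneg (by norm_num) (hlogk k hk).le) (hZlb k hk) (by linarith)
          have hZineq2 : ((1 / 2 : ℝ)) ^ ((1 : ℝ) + s) * Real.log ((k : ℝ) + 1) ^ ((1 : ℝ) + s)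
              ≤ (Z k) ^ ((1 : ℝ) + s) := by
            rw [← Real.mul_rpow (by norm_num) (hlogk k hk).le]
            exact hZineq
          have hprod : c₃ * (((k : ℝ) + 1) * Real.log ((k : ℝ) + 1) ^ (1 + s))
              ≤ Y k * (Z k) ^ ((1 : ℝ) + s) := by
            have h1 := hYlb k hk
            have h2 := hZineq2
            have hYk := hYpos k hk
            have hlk := (Real.rpow_pos_of_pos (hlogk k hk) ((1 : ℝ) + s)).le
            calc c₃ * (((k : ℝ) + 1) * Real.log ((k : ℝ) + 1) ^ (1 + s))
                = (((k : ℝ) + 1) * (Real.log 2 / 6)) *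
                  ((1 / 2 : ℝ) ^ ((1 : ℝ) + s) * Real.log ((k : ℝ) + 1) ^ ((1 : ℝ) + s)) := by
                  rw [hc₃def]; ring
              _ ≤ Y k * (Z k) ^ ((1 : ℝ) + s) := by
                  apply mul_le_mul h1 h2
                  · exact mul_nonneg (Real.rpow_nonneg (by norm_num) _)
                      (Real.rpow_nonneg (hlogk k hk).le _)
                  · exact hYk.le
          -- final real computation
          have h2k : (0 : ℝ) < (2 : ℝ) ^ k := by positivity
          rw [mul_pow, hδd]
          have hL : (2 : ℝ) ^ (k + 1) * ((4 : ℝ) ^ d *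
              (1 / ((2 : ℝ) ^ k * Y k * (Z k) ^ ((1 : ℝ) + s))))
              = 2 * 4 ^ d / (Y k * (Z k) ^ ((1 : ℝ) + s)) := by
            have hYne : Y k ≠ 0 := (hYpos k hk).ne'
            have hZne : (Z k) ^ ((1 : ℝ) + s) ≠ 0 :=
              (Real.rpow_pos_of_pos (hZpos k hk) _).ne'
            field_simp
            ring
          rw [hL]
          have hYZpos : (0 : ℝ) < Y k * (Z k) ^ ((1 : ℝ) + s) :=
            mul_pos (hYpos k hk) (Real.rpow_pos_of_pos (hZpos k hk) _)
          calc 2 * 4 ^ d / (Y k * (Z k) ^ ((1 : ℝ) + s))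
              ≤ 2 * 4 ^ d / (c₃ * (((k : ℝ) + 1) * Real.log ((k : ℝ) + 1) ^ (1 + s))) := by
                apply div_le_div_of_nonneg_left (by positivity) (by positivity) hprod
            _ = A * f k := by
                rw [hAdef, hfdef]
                field_simp
  -- Borel-Cantelli
  have hsumA : Summable (fun j : ℕ => A * f (j + K)) :=
    ((summable_nat_add_iff K).2 (summable_bertrand hs)).mul_left A
  have hfnn : ∀ j : ℕ, 0 ≤ A * f (j + K) := by
    intro j
    apply mul_nonneg hApos.le
    apply one_div_nonneg.2
    apply mul_nonneg (by positivity)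
    exact Real.rpow_nonneg (Real.log_nonneg (by push_cast; linarith [Nat.cast_nonneg (α := ℝ) (j + K)])) _
  have hsum : (∑' j : ℕ, (volume.restrict box) (E (j + K))) ≠ ⊤ := by
    have hle : (∑' j : ℕ, (volume.restrict box) (E (j + K)))
        ≤ ∑' j : ℕ, ENNReal.ofReal (A * f (j + K)) :=
      ENNReal.tsum_le_tsum fun j => bnd (j + K) (by omega)
    rw [← ENNReal.ofReal_tsum_of_nonneg hfnn hsumA] at hle
    exact ne_top_of_le_ne_top ENNReal.ofReal_ne_top hle
  have hBC := MeasureTheory.ae_eventually_notMem hsum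
  filter_upwards [hBC] with α hα
  obtain ⟨J, hJ⟩ := eventually_atTop.1 hα
  refine ⟨Nk (K + J) + 16, ?_⟩
  intro N hN
  have hN16 : 16 ≤ N := by omega
  have hNNk : Nk (K + J) ≤ N := by omega
  -- choose k
  set P : ℕ → Prop := fun k => Nk k ≤ N with hPdef
  have hPbound : ∀ k', P k' → k' < 2 * N := by
    intro k' hP
    have h1 : k' / 2 < 2 ^ (k' / 2) := Nat.lt_two_pow_self
    have h2 := hNk_ge k'
    have : k' / 2 < N := by omega
    omega
  have hKJ2N : K + J ≤ 2 * N := (hPbound (K + J) hNNk).le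
  set k : ℕ := Nat.findGreatest P (2 * N) with hkdef
  have hPk : P k := Nat.findGreatest_spec hKJ2N hNNk
  have hkge : K + J ≤ k := Nat.le_findGreatest hKJ2N hNNk
  have hkK : K ≤ k := by omega
  have hk2N : k < 2 * N := hPbound k hPk
  have hnotP : ¬ P (k + 1) :=
    Nat.findGreatest_is_greatest (Nat.lt_succ_self _) (by omega)
  have hNltNk : N < Nk (k + 1) := by
    simp only [hPdef, not_le] at hnotP
    exact hnotP
  have hNM : N ≤ M k := by
    show N ≤ Nk (k + 1) - 1
    omega
  -- event conclusion
  have hnotE : α ∉ E k := by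
    have := hJ (k - K) (by omega)
    have hkk : k - K + K = k := by omega
    rwa [hkk] at this
  have hgap : δstar k ≤ minGapInf (fun n i => Int.fract ((a i n : ℝ) * α i)) (M k) := by
    simp only [hEdef, Set.mem_setOf_eq, not_lt] at hnotE
    exact hnotE
  have hanti : minGapInf (fun n i => Int.fract ((a i n : ℝ) * α i)) (M k)
      ≤ minGapInf (fun n i => Int.fract ((a i n : ℝ) * α i)) N :=
    minGapInf_anti _ (by omega) hNM
  have hCN : ((2 : ℝ)) ^ k ≤ ((diffSetVec a N).card : ℝ) := by
    have h1 : 2 ^ k ≤ (diffSetVec a N).card :=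
      le_trans (hNk_spec k) (Finset.card_le_card (diffSetVec_mono a hPk))
    calc ((2 : ℝ)) ^ k = ((2 ^ k : ℕ) : ℝ) := by push_cast; ring
      _ ≤ _ := by exact_mod_cast h1
  have hNkN : (Nk k : ℝ) ≤ (N : ℝ) := by exact_mod_cast hPk
  have hNkpos : (0 : ℝ) < (Nk k : ℝ) := by
    have := hNk16 k hkK
    have : (16 : ℝ) ≤ (Nk k : ℝ) := by exact_mod_cast this
    linarith
  have hYle : Y k ≤ Real.log N := Real.log_le_log hNkpos hNkN
  have hZle : Z k ≤ Real.log (Real.log N) := Real.log_le_log (hYpos k hkK) hYle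
  have hDpos : 0 < ((2 : ℝ) ^ k) ^ ((1 : ℝ) / d) * (Y k) ^ ((1 : ℝ) / d)
      * (Z k) ^ ((1 : ℝ) / d + ε) := by
    apply mul_pos (mul_pos _ _) _
    · exact Real.rpow_pos_of_pos (by positivity) _
    · exact Real.rpow_pos_of_pos (hYpos k hkK) _
    · exact Real.rpow_pos_of_pos (hZpos k hkK) _
  have hεd : (0 : ℝ) ≤ (1 : ℝ) / d + ε := by positivity
  have hDle : ((2 : ℝ) ^ k) ^ ((1 : ℝ) / d) * (Y k) ^ ((1 : ℝ) / d)
      * (Z k) ^ ((1 : ℝ) / d + ε)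
      ≤ ((diffSetVec a N).card : ℝ) ^ ((1 : ℝ) / d) * (Real.log N) ^ ((1 : ℝ) / d) *
        (Real.log (Real.log N)) ^ ((1 : ℝ) / d + ε) := by
    apply mul_le_mul
    · apply mul_le_mul
      · exact Real.rpow_le_rpow (by positivity) hCN (by positivity)
      · exact Real.rpow_le_rpow (hYpos k hkK).le hYle (by positivity)
      · exact Real.rpow_nonneg (hYpos k hkK).le _
      · exact Real.rpow_nonneg (by positivity) _
    · exact Real.rpow_le_rpow (hZpos k hkK).le hZle hεd
    · exact Real.rpow_nonneg (hZpos k hkK).le _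
    · exact mul_nonneg (Real.rpow_nonneg (by positivity) _)
        (Real.rpow_nonneg (Real.log_nonneg (by
          have : (16 : ℝ) ≤ (N : ℝ) := by exact_mod_cast hN16
          linarith)) _)
  have hfinal : 1 / (((diffSetVec a N).card : ℝ) ^ ((1 : ℝ) / d) *
      (Real.log N) ^ ((1 : ℝ) / d) *
      (Real.log (Real.log N)) ^ ((1 : ℝ) / d + ε)) ≤ δstar k := by
    simp only [hδdef]
    exact one_div_le_one_div_of_le hDpos hDle
  exact le_trans hfinal (le_trans hgap hanti)
end

section
/- Let K ≥ 1 and let N be an integer with 2^{K−1} ≤ N < 2^K and N ≥ 2. Then the minimal gap of the base-2 van der Corput sequence satisfies δ_min((g_2(n)), N) = 1/2^K. -/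
/-- Minimal gap of a real sequence among indices `1 ≤ m ≠ n ≤ N`,
measured by the distance to the nearest integer of the difference. -/
noncomputable def minGap (x : ℕ → ℝ) (N : ℕ) : ℝ :=
  sInf {r | ∃ m n, 1 ≤ m ∧ m ≤ N ∧ 1 ≤ n ∧ n ≤ N ∧ m ≠ n ∧ r = nid (x n - x m)}

/-- The base-`b` van der Corput sequence: digit reversal of `n` into `[0,1)`.
The `i`-th base-`b` digit of `n` is `n / b ^ i % b`. -/
noncomputable def vdc (b n : ℕ) : ℝ :=
  ∑ i ∈ Finset.range n, ((n / b ^ i % b : ℕ) : ℝ) / (b : ℝ) ^ (i + 1)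

lemma vdc_eq_sum (n L : ℕ) (h : n ≤ L) :
    vdc 2 n = ∑ i ∈ Finset.range L, ((n / 2 ^ i % 2 : ℕ) : ℝ) / (2 : ℝ) ^ (i + 1) := by
  unfold vdc
  push_cast
  refine Finset.sum_subset (Finset.range_subset_range.2 h) ?_
  intro i hi hni
  simp only [Finset.mem_range] at hi hni
  have : n < 2 ^ i := lt_of_lt_of_le (Nat.lt_two_pow_self (n := n)) (Nat.pow_le_pow_right (by norm_num) (le_of_not_gt hni))
  rw [Nat.div_eq_of_lt this]
  simp

lemma vdc_rec (n : ℕ) :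
    vdc 2 n = ((n % 2 : ℕ) : ℝ) / 2 + vdc 2 (n / 2) / 2 := by
  rw [vdc_eq_sum n (n + 1) (Nat.le_succ n), Finset.sum_range_succ',
    vdc_eq_sum (n / 2) n (Nat.div_le_self n 2)]
  have key : ∀ i : ℕ, ((n / 2 ^ (i + 1) % 2 : ℕ) : ℝ) / (2 : ℝ) ^ (i + 1 + 1)
      = (((n / 2) / 2 ^ i % 2 : ℕ) : ℝ) / (2 : ℝ) ^ (i + 1) / 2 := by
    intro i
    have : n / 2 ^ (i + 1) = (n / 2) / 2 ^ i := by
      rw [Nat.div_div_eq_div_mul, pow_succ']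
    rw [this]
    ring
  rw [Finset.sum_congr rfl (fun i _ => key i), ← Finset.sum_div]
  norm_num [Nat.div_one]
  ring

lemma vdc_nonneg (n : ℕ) : 0 ≤ vdc 2 n := by
  unfold vdc
  positivity

lemma vdc_lt_one (n : ℕ) : vdc 2 n < 1 := by
  induction n using Nat.strong_induction_on with
  | _ n ih =>
    rcases Nat.eq_zero_or_pos n with h | h
    · subst h; simp [vdc]
    · rw [vdc_rec]
      have h1 := ih (n / 2) (Nat.div_lt_self h one_lt_two)
      have h2 : ((n % 2 : ℕ) : ℝ) ≤ 1 := by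
        have := Nat.mod_lt n (show 0 < 2 by norm_num)
        exact_mod_cast Nat.lt_succ_iff.mp this
      linarith

lemma vdc_eq_zero {n : ℕ} (h : vdc 2 n = 0) : n = 0 := by
  induction n using Nat.strong_induction_on with
  | _ n ih =>
    rcases Nat.eq_zero_or_pos n with h0 | h0
    · exact h0
    · rw [vdc_rec] at h
      have hm : (0:ℝ) ≤ ((n % 2 : ℕ) : ℝ) := by positivity
      have hv := vdc_nonneg (n / 2)
      have hv0 : vdc 2 (n / 2) = 0 := by linarith
      have := ih (n / 2) (Nat.div_lt_self h0 one_lt_two) hv0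
      have hm0 : ((n % 2 : ℕ) : ℝ) = 0 := by linarith
      have : n % 2 = 0 := by exact_mod_cast hm0
      omega

lemma vdc_inj : ∀ n m : ℕ, vdc 2 m = vdc 2 n → m = n := by
  intro n
  induction n using Nat.strong_induction_on with
  | _ n ih =>
    intro m h
    rcases Nat.eq_zero_or_pos n with h0 | h0
    · subst h0; simp [vdc] at h; exact vdc_eq_zero h
    · rw [vdc_rec m, vdc_rec n] at h
      have hvm0 := vdc_nonneg (m / 2)
      have hvm1 := vdc_lt_one (m / 2)
      have hvn0 := vdc_nonneg (n / 2)
      have hvn1 := vdc_lt_one (n / 2)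
      have hpar : m % 2 = n % 2 := by
        rcases Nat.mod_two_eq_zero_or_one m with hm | hm <;>
          rcases Nat.mod_two_eq_zero_or_one n with hn | hn <;>
          rw [hm, hn] at h ⊢ <;> push_cast at h <;> first | rfl | linarith
      have hv : vdc 2 (m / 2) = vdc 2 (n / 2) := by
        rw [hpar] at h; linarith
      have := ih (n / 2) (Nat.div_lt_self h0 one_lt_two) (m / 2) hv
      omega

lemma vdc_exists (K : ℕ) : ∀ n, n < 2 ^ K → ∃ a : ℕ, a < 2 ^ K ∧ vdc 2 n = (a : ℝ) / 2 ^ K := by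
  induction K with
  | zero =>
    intro n hn
    interval_cases n
    exact ⟨0, by norm_num, by simp [vdc]⟩
  | succ K ih =>
    intro n hn
    obtain ⟨a, ha, hva⟩ := ih (n / 2) (by omega)
    have hlt : n % 2 * 2 ^ K + a < 2 ^ (K + 1) := by
      have h2 : n % 2 ≤ 1 := by omega
      have h3 : n % 2 * 2 ^ K ≤ 1 * 2 ^ K := Nat.mul_le_mul_right _ h2
      have h4 : 2 ^ (K + 1) = 2 ^ K + 2 ^ K := by rw [pow_succ]; ring
      omega
    refine ⟨n % 2 * 2 ^ K + a, hlt, ?_⟩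
    rw [vdc_rec, hva]
    push_cast
    have : (2:ℝ) ^ (K+1) = 2 ^ K * 2 := by ring
    field_simp
    ring

lemma vdc_pow (j : ℕ) : vdc 2 (2 ^ j) = 1 / (2:ℝ) ^ (j + 1) := by
  induction j with
  | zero => rw [show (2:ℕ)^0 = 1 from rfl, vdc_rec]; simp [vdc]
  | succ j ih =>
    rw [vdc_rec]
    have h1 : 2 ^ (j+1) % 2 = 0 := by
      simp [pow_succ, Nat.mul_mod_left]
    have h2 : 2 ^ (j+1) / 2 = 2 ^ j := by
      rw [pow_succ]; exact Nat.mul_div_cancel _ (by norm_num)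
    rw [h1, h2, ih]
    push_cast
    ring

lemma nid_lb {a b K : ℕ} (ha : a < 2 ^ K) (hb : b < 2 ^ K) (hab : a ≠ b) :
    1 / (2:ℝ) ^ K ≤ nid ((a : ℝ) / 2 ^ K - (b : ℝ) / 2 ^ K) := by
  unfold nid
  set x : ℝ := (a : ℝ) / 2 ^ K - (b : ℝ) / 2 ^ K with hx
  set r : ℤ := round x with hr
  have hpow : (0:ℝ) < 2 ^ K := by positivity
  have hxr : x - r = (((a : ℤ) - b - r * 2 ^ K : ℤ) : ℝ) / 2 ^ K := by
    push_cast
    field_simp [hx]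
    rw [hx, sub_mul, sub_mul, div_mul_cancel₀ _ hpow.ne', div_mul_cancel₀ _ hpow.ne']
  set j : ℤ := (a : ℤ) - b - r * 2 ^ K with hj
  have hP : (0:ℤ) < 2 ^ K := pow_pos (by norm_num) K
  have haP : (a:ℤ) < 2 ^ K := by exact_mod_cast ha
  have hbP : (b:ℤ) < 2 ^ K := by exact_mod_cast hb
  have hjne : j ≠ 0 := by
    intro h0
    have heq : (a : ℤ) - b = r * 2 ^ K := by linarith [hj]
    rcases lt_trichotomy r 0 with h | h | h
    · have hr1 : r ≤ -1 := by omega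
      have : r * 2 ^ K ≤ (-1) * 2 ^ K := by
        exact mul_le_mul_of_nonneg_right hr1 (le_of_lt hP)
      have hb0 : (0:ℤ) ≤ (b:ℤ) := Int.natCast_nonneg b
      linarith
    · rw [h, zero_mul] at heq
      have : a = b := by omega
      exact hab this
    · have hr1 : (1:ℤ) ≤ r := h
      have : (1:ℤ) * 2 ^ K ≤ r * 2 ^ K := by
        exact mul_le_mul_of_nonneg_right hr1 (le_of_lt hP)
      have ha0 : (0:ℤ) ≤ (a:ℤ) := Int.natCast_nonneg a
      linarith
  have habs : (1:ℝ) ≤ |(j : ℝ)| := by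
    have h1 : 1 ≤ |j| := by
      rcases hjne.lt_or_gt with h | h
      · rw [abs_of_neg h]; omega
      · rw [abs_of_pos h]; omega
    calc (1:ℝ) = ((1:ℤ):ℝ) := by norm_num
    _ ≤ ((|j|:ℤ):ℝ) := by exact_mod_cast h1
    _ = |(j:ℝ)| := by push_cast; rfl
  rw [hxr, abs_div, abs_of_pos hpow, div_le_div_iff₀ (by positivity) hpow]
  nlinarith

theorem stmt11 (K N : ℕ) (hK : 1 ≤ K) (h1 : 2 ^ (K - 1) ≤ N) (h2 : N < 2 ^ K)
    (hN : 2 ≤ N) :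
    minGap (vdc 2) N = 1 / (2 : ℝ) ^ K := by
  have hK2 : 2 ≤ K := by
    by_contra h
    interval_cases K <;> simp_all <;> omega
  obtain ⟨k, hk⟩ : ∃ k, K = k + 2 := ⟨K - 2, by omega⟩
  subst hk
  -- witness element
  have hwit : nid (vdc 2 (2 ^ k) - vdc 2 (2 ^ (k + 1))) = 1 / (2:ℝ) ^ (k + 2) := by
    rw [vdc_pow, vdc_pow]
    have hval : 1 / (2:ℝ) ^ (k + 1) - 1 / (2:ℝ) ^ (k + 1 + 1) = 1 / (2:ℝ) ^ (k + 2) := by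
      have : (0:ℝ) < 2 ^ (k+2) := by positivity
      field_simp
      ring
    rw [hval]
    unfold nid
    have h4 : (4:ℝ) ≤ 2 ^ (k + 2) := by
      calc (4:ℝ) = 2 ^ 2 := by norm_num
      _ ≤ 2 ^ (k + 2) := by
          apply pow_le_pow_right₀ (by norm_num) (by omega)
    have hlt : (1:ℝ) / 2 ^ (k + 2) < 1 / 2 := by
      rw [div_lt_div_iff₀ (by positivity) (by norm_num)]
      linarith
    have hpos : (0:ℝ) < 1 / 2 ^ (k + 2) := by positivity
    have : round ((1:ℝ) / 2 ^ (k + 2)) = 0 := by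
      rw [round_eq_zero_iff]
      constructor <;> [linarith; linarith]
    rw [this]
    simpa using le_of_lt hpos
  have hmem : (1 / (2:ℝ) ^ (k + 2)) ∈
      {r | ∃ m n, 1 ≤ m ∧ m ≤ N ∧ 1 ≤ n ∧ n ≤ N ∧ m ≠ n ∧ r = nid (vdc 2 n - vdc 2 m)} := by
    refine ⟨2 ^ (k + 1), 2 ^ k, Nat.one_le_two_pow, ?_, Nat.one_le_two_pow, ?_, ?_, hwit.symm⟩
    · exact h1
    · calc 2 ^ k ≤ 2 ^ (k+1) := Nat.pow_le_pow_right (by norm_num) (by omega)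
      _ ≤ N := h1
    · have : 2 ^ k < 2 ^ (k+1) := Nat.pow_lt_pow_right (by norm_num) (by omega)
      omega
  have hlb : ∀ r ∈ {r | ∃ m n, 1 ≤ m ∧ m ≤ N ∧ 1 ≤ n ∧ n ≤ N ∧ m ≠ n ∧
      r = nid (vdc 2 n - vdc 2 m)}, 1 / (2:ℝ) ^ (k + 2) ≤ r := by
    rintro r ⟨m, n, hm1, hmN, hn1, hnN, hmn, rfl⟩
    obtain ⟨a, ha, hva⟩ := vdc_exists (k + 2) n (by omega)
    obtain ⟨b, hb, hvb⟩ := vdc_exists (k + 2) m (by omega)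
    have hab : a ≠ b := by
      intro h
      apply hmn
      apply vdc_inj
      rw [hva, hvb, h]
    rw [hva, hvb]
    exact nid_lb ha hb hab
  unfold minGap
  apply le_antisymm
  · exact csInf_le ⟨1 / (2:ℝ) ^ (k + 2), hlb⟩ hmem
  · exact le_csInf ⟨_, hmem⟩ hlb
end

section
/- Let k ≥ 1 and let m ≠ n be integers with 2^{k/2} < m, n ≤ 2^k. If the vectors 𝐳_n and 𝐳_m are not parallel (neither is a rational scalar multiple of the other), then λ(S*_n ∩ S*_m) = λ(S*_n) · λ(S*_m), where S*_j = { α ∈ [0,1]^d : |𝐳_j · α − q| < 1/(2j+1) for some q ∈ ℤ such that every prime p dividing gcd(q, gcd(𝐳_j)) satisfies p > 4^k }. -/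
open MeasureTheory Filter Set ENNReal

/-- 1-periodicity of a set of reals. -/
def PerS (A : Set ℝ) : Prop := ∀ x : ℝ, x ∈ A ↔ x + 1 ∈ A

lemma PerS.int {A : Set ℝ} (hA : PerS A) (n : ℤ) (x : ℝ) : x ∈ A ↔ x + n ∈ A := by
  induction n using Int.induction_on with
  | zero => simp
  | succ k ih =>
    push_cast at ih ⊢
    have h2 : x + ((k:ℝ) + 1) = x + (k:ℝ) + 1 := by ring
    rw [h2, ← hA (x + k)]
    exact ih
  | pred k ih =>
    push_cast at ih ⊢
    have h2 : x + (-(k:ℝ) - 1) + 1 = x + -(k:ℝ) := by ring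
    rw [ih, hA (x + (-(k:ℝ) - 1)), h2]

lemma vol_preimage_add (c : ℝ) (S : Set ℝ) : volume ((fun x => x + c) ⁻¹' S) = volume S := by
  have h : (fun x : ℝ => x + c) = fun x => c + x := by ext x; ring
  rw [h]
  exact measure_preimage_add volume c S

lemma PerS.vol_window {A : Set ℝ} (hA : MeasurableSet A) (hp : PerS A) (r : ℝ) :
    volume (A ∩ Ioc r (r+1)) = volume (A ∩ Ioc (0:ℝ) 1) := by
  have key : ∀ (n : ℤ) (t : ℝ), volume (A ∩ Ioc (t + n) (t + n + 1)) = volume (A ∩ Ioc t (t+1)) := by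
    intro n t
    have hset : (fun x : ℝ => x + (n:ℝ)) ⁻¹' (A ∩ Ioc (t + n) (t + n + 1)) = A ∩ Ioc t (t+1) := by
      ext x
      simp only [Set.mem_preimage, Set.mem_inter_iff, Set.mem_Ioc]
      constructor
      · rintro ⟨h1, h2, h3⟩
        exact ⟨(hp.int n x).mpr h1, by linarith, by linarith⟩
      · rintro ⟨h1, h2, h3⟩
        exact ⟨(hp.int n x).mp h1, by linarith, by linarith⟩
    rw [← hset, vol_preimage_add]
  have hfr : r = (r - ⌊r⌋) + (⌊r⌋ : ℤ) := by push_cast; ring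
  have h1 : volume (A ∩ Ioc r (r+1)) = volume (A ∩ Ioc (r - ⌊r⌋) ((r - ⌊r⌋)+1)) := by
    have := key ⌊r⌋ (r - ⌊r⌋)
    rw [show (r - ⌊r⌋ : ℝ) + (⌊r⌋:ℤ) = r by push_cast; ring] at this
    exact this
  set f := r - ⌊r⌋ with hf
  have hf0 : 0 ≤ f := by
    have := Int.floor_le r; simp only [hf]; linarith
  have hf1 : f < 1 := by
    have := Int.lt_floor_add_one r; simp only [hf]; linarith
  rw [h1]
  -- split the window [f, f+1] at 1
  have hsplit : Ioc f (f+1) = Ioc f 1 ∪ Ioc 1 (f+1) := (Set.Ioc_union_Ioc_eq_Ioc (by linarith) (by linarith)).symm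
  have hdisj : Disjoint (A ∩ Ioc f 1) (A ∩ Ioc 1 (f+1)) := by
    apply Set.disjoint_left.mpr
    rintro x ⟨_, _, h2⟩ ⟨_, h3, _⟩
    linarith
  have hmeas : MeasurableSet (A ∩ Ioc 1 (f+1)) := hA.inter measurableSet_Ioc
  rw [hsplit, Set.inter_union_distrib_left, measure_union hdisj hmeas]
  have hshift : volume (A ∩ Ioc 1 (f+1)) = volume (A ∩ Ioc 0 f) := by
    have hset : (fun x : ℝ => x + (1:ℝ)) ⁻¹' (A ∩ Ioc 1 (f+1)) = A ∩ Ioc 0 f := by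
      ext x
      simp only [Set.mem_preimage, Set.mem_inter_iff, Set.mem_Ioc]
      constructor
      · rintro ⟨h1', h2, h3⟩
        exact ⟨(hp x).mpr h1', by linarith, by linarith⟩
      · rintro ⟨h1', h2, h3⟩
        exact ⟨(hp x).mp h1', by linarith, by linarith⟩
    rw [← hset, vol_preimage_add]
  rw [hshift]
  have hsplit2 : Ioc (0:ℝ) 1 = Ioc 0 f ∪ Ioc f 1 := (Set.Ioc_union_Ioc_eq_Ioc (by linarith) (by linarith)).symm
  have hdisj2 : Disjoint (A ∩ Ioc (0:ℝ) f) (A ∩ Ioc f 1) := by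
    apply Set.disjoint_left.mpr
    rintro x ⟨_, _, h2⟩ ⟨_, h3, _⟩
    linarith
  rw [hsplit2, Set.inter_union_distrib_left, measure_union hdisj2 (hA.inter measurableSet_Ioc), add_comm]

lemma vol_inter_Icc_eq_Ioc (S : Set ℝ) :
    volume (S ∩ Icc (0:ℝ) 1) = volume (S ∩ Ioc (0:ℝ) 1) := by
  apply le_antisymm
  · calc volume (S ∩ Icc (0:ℝ) 1) ≤ volume ((S ∩ Ioc (0:ℝ) 1) ∪ {0}) := by
          apply measure_mono
          rintro x ⟨hxS, hx0, hx1⟩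
          rcases eq_or_lt_of_le hx0 with h | h
          · exact Or.inr (by simp [← h])
          · exact Or.inl ⟨hxS, h, hx1⟩
        _ ≤ volume (S ∩ Ioc (0:ℝ) 1) + volume ({0} : Set ℝ) := measure_union_le _ _
        _ = volume (S ∩ Ioc (0:ℝ) 1) := by simp
  · exact measure_mono (Set.inter_subset_inter_right _ Set.Ioc_subset_Icc_self)

lemma vol_inter_Ico_eq_Ioc (S : Set ℝ) (a b : ℝ) :
    volume (S ∩ Ico a b) = volume (S ∩ Ioc a b) := by
  apply le_antisymm
  · calc volume (S ∩ Ico a b) ≤ volume ((S ∩ Ioc a b) ∪ {a}) := by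
          apply measure_mono
          rintro x ⟨hxS, hx0, hx1⟩
          rcases eq_or_lt_of_le hx0 with h | h
          · exact Or.inr (by simp [← h])
          · exact Or.inl ⟨hxS, h, hx1.le⟩
        _ ≤ volume (S ∩ Ioc a b) + volume ({a} : Set ℝ) := measure_union_le _ _
        _ = volume (S ∩ Ioc a b) := by simp
  · calc volume (S ∩ Ioc a b) ≤ volume ((S ∩ Ico a b) ∪ {b}) := by
          apply measure_mono
          rintro x ⟨hxS, hx0, hx1⟩
          rcases eq_or_lt_of_le hx1 with h | h
          · exact Or.inr (by simp [h])
          · exact Or.inl ⟨hxS, hx0.le, h⟩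
        _ ≤ volume (S ∩ Ico a b) + volume ({b} : Set ℝ) := measure_union_le _ _
        _ = volume (S ∩ Ico a b) := by simp

lemma PerS.vol_window_nat {A : Set ℝ} (hA : MeasurableSet A) (hp : PerS A) (c : ℝ) :
    ∀ n : ℕ, volume (A ∩ Ioc c (c + n)) = n * volume (A ∩ Ioc (0:ℝ) 1) := by
  intro n
  induction n with
  | zero => simp
  | succ n ih =>
    have hsplit : Ioc c (c + (n+1 : ℕ)) = Ioc c (c + n) ∪ Ioc (c + n) (c + n + 1) := by
      rw [Set.Ioc_union_Ioc_eq_Ioc (by linarith [Nat.cast_nonneg (α := ℝ) n]) (by push_cast; linarith)]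
      push_cast
      ring_nf
    have hdisj : Disjoint (A ∩ Ioc c (c + n)) (A ∩ Ioc (c + n) (c + n + 1)) := by
      apply Set.disjoint_left.mpr
      rintro x ⟨_, _, h2⟩ ⟨_, h3, _⟩
      linarith
    rw [hsplit, Set.inter_union_distrib_left,
      measure_union hdisj (hA.inter measurableSet_Ioc), ih, hp.vol_window hA (c + n)]
    push_cast
    ring

lemma vol_neg (S : Set ℝ) : volume (Neg.neg ⁻¹' S) = volume S := by
  have : Neg.neg ⁻¹' S = -S := rfl
  rw [this, ← Measure.neg_apply, Measure.neg_eq_self]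

/-- The 1D scaling lemma. -/
lemma PerS.vol_scale {A : Set ℝ} (hA : MeasurableSet A) (hp : PerS A) {k : ℤ} (hk : k ≠ 0)
    (c : ℝ) :
    volume ({x : ℝ | (k:ℝ) * x + c ∈ A} ∩ Ioc 0 1) = volume (A ∩ Ioc (0:ℝ) 1) := by
  -- first prove it for positive k, for all A
  have pos_case : ∀ (A : Set ℝ), MeasurableSet A → PerS A → ∀ (k : ℤ), 0 < k → ∀ c : ℝ,
      volume ({x : ℝ | (k:ℝ) * x + c ∈ A} ∩ Ioc 0 1) = volume (A ∩ Ioc (0:ℝ) 1) := by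
    intro A hA hp k hkpos c
    have hk0 : (k:ℝ) ≠ 0 := by exact_mod_cast hkpos.ne'
    have hset : {x : ℝ | (k:ℝ) * x + c ∈ A} ∩ Ioc 0 1
        = ((k:ℝ) * ·) ⁻¹' ((· + c) ⁻¹' (A ∩ Ioc c (c + k))) := by
      ext x
      simp only [Set.mem_inter_iff, Set.mem_setOf_eq, Set.mem_Ioc, Set.mem_preimage]
      have hkR : (0:ℝ) < k := by exact_mod_cast hkpos
      constructor
      · rintro ⟨h1, h2, h3⟩
        refine ⟨h1, by nlinarith, by nlinarith⟩
      · rintro ⟨h1, h2, h3⟩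
        refine ⟨h1, by nlinarith, by nlinarith⟩
    rw [hset]
    have h1 : ((· + c) ⁻¹' (A ∩ Ioc c (c + k))) = (fun x => x + c) ⁻¹' (A ∩ Ioc c (c + k)) := rfl
    rw [Real.volume_preimage_mul_left hk0, h1, vol_preimage_add]
    obtain ⟨nn, rfl⟩ : ∃ nn : ℕ, k = (nn : ℤ) := ⟨k.toNat, (Int.toNat_of_nonneg hkpos.le).symm⟩
    push_cast
    rw [hp.vol_window_nat hA c nn, ← mul_assoc]
    have hnn : (0:ℝ) < nn := by exact_mod_cast hkpos
    have hnn' : (0:ℕ) < nn := by exact_mod_cast hkpos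
    rw [show |((nn:ℝ))⁻¹| = ((nn:ℝ))⁻¹ by rw [abs_of_pos]; positivity]
    rw [ENNReal.ofReal_inv_of_pos hnn]
    rw [ENNReal.ofReal_natCast]
    rw [ENNReal.inv_mul_cancel (Nat.cast_ne_zero.mpr hnn'.ne') (ENNReal.natCast_ne_top nn)]
    rw [one_mul]
  rcases lt_or_gt_of_ne hk with hneg | hpos
  · -- reduce to positive case via A' = -A
    set A' : Set ℝ := Neg.neg ⁻¹' A with hA'
    have hA'm : MeasurableSet A' := hA.preimage measurable_neg
    have hA'p : PerS A' := by
      intro x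
      simp only [hA', Set.mem_preimage, neg_add]
      constructor
      · intro h
        have := (hp.int (-1) (-x)).mp h
        simpa using this
      · intro h
        have := (hp.int 1 (-x + -1)).mp h
        simpa using this
    have hset : {x : ℝ | (k:ℝ) * x + c ∈ A} = {x : ℝ | ((-k:ℤ):ℝ) * x + (-c) ∈ A'} := by
      ext x
      simp only [Set.mem_setOf_eq, hA', Set.mem_preimage]
      push_cast
      rw [show -(-(k:ℝ) * x + -c) = (k:ℝ)*x + c by ring]
    rw [hset, pos_case A' hA'm hA'p (-k) (by omega) (-c)]
    -- volume (A' ∩ Ioc 0 1) = volume (A ∩ Ioc 0 1)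
    have hset2 : A' ∩ Ioc (0:ℝ) 1 = Neg.neg ⁻¹' (A ∩ Ico (-1:ℝ) 0) := by
      ext x
      simp only [hA', Set.mem_inter_iff, Set.mem_preimage, Set.mem_Ioc, Set.mem_Ico]
      constructor
      · rintro ⟨h1, h2, h3⟩; exact ⟨h1, by linarith, by linarith⟩
      · rintro ⟨h1, h2, h3⟩; exact ⟨h1, by linarith, by linarith⟩
    rw [hset2, vol_neg, vol_inter_Ico_eq_Ioc]
    have := hp.vol_window hA (-1)
    rw [show (-1:ℝ) + 1 = 0 by ring] at this
    exact this
  · exact pos_case A hA hp k hpos c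

lemma meas_affine {A : Set ℝ} (hA : MeasurableSet A) (a b : ℝ) :
    MeasurableSet {x : ℝ | a * x + b ∈ A} :=
  hA.preimage ((measurable_id.const_mul a).add_const b)

lemma meas_joint {A B : Set ℝ} (hA : MeasurableSet A) (hB : MeasurableSet B) (a c : ℤ)
    (s₁ s₂ : ℝ) : MeasurableSet {x : ℝ | (a:ℝ) * x + s₁ ∈ A ∧ (c:ℝ) * x + s₂ ∈ B} := by
  have : {x : ℝ | (a:ℝ) * x + s₁ ∈ A ∧ (c:ℝ) * x + s₂ ∈ B}
      = {x : ℝ | (a:ℝ) * x + s₁ ∈ A} ∩ {x : ℝ | (c:ℝ) * x + s₂ ∈ B} := rfl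
  rw [this]
  exact (meas_affine hA _ _).inter (meas_affine hB _ _)

lemma per_joint {A B : Set ℝ} (hpA : PerS A) (hpB : PerS B) (a c : ℤ) (s₁ s₂ : ℝ) :
    PerS {x : ℝ | (a:ℝ) * x + s₁ ∈ A ∧ (c:ℝ) * x + s₂ ∈ B} := by
  intro x
  simp only [Set.mem_setOf_eq]
  constructor
  · rintro ⟨h1, h2⟩
    constructor
    · have := (hpA.int a ((a:ℝ)*x + s₁)).mp h1
      rw [show (a:ℝ)*x + s₁ + a = (a:ℝ)*(x+1) + s₁ by ring] at this; exact this
    · have := (hpB.int c ((c:ℝ)*x + s₂)).mp h2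
      rw [show (c:ℝ)*x + s₂ + c = (c:ℝ)*(x+1) + s₂ by ring] at this; exact this
  · rintro ⟨h1, h2⟩
    constructor
    · have := (hpA.int (-a) ((a:ℝ)*(x+1) + s₁)).mp h1
      rw [show (a:ℝ)*(x+1) + s₁ + (-a:ℤ) = (a:ℝ)*x + s₁ by push_cast; ring] at this; exact this
    · have := (hpB.int (-c) ((c:ℝ)*(x+1) + s₂)).mp h2
      rw [show (c:ℝ)*(x+1) + s₂ + (-c:ℤ) = (c:ℝ)*x + s₂ by push_cast; ring] at this; exact this

/-- Joint shift invariance. -/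
lemma Gshift {A B : Set ℝ} (hA : MeasurableSet A) (hB : MeasurableSet B)
    (hpA : PerS A) (hpB : PerS B) (a c : ℤ) (s₁ s₂ r : ℝ) :
    volume ({x : ℝ | (a:ℝ) * x + (s₁ + a * r) ∈ A ∧ (c:ℝ) * x + (s₂ + c * r) ∈ B} ∩ Ioc 0 1)
      = volume ({x : ℝ | (a:ℝ) * x + s₁ ∈ A ∧ (c:ℝ) * x + s₂ ∈ B} ∩ Ioc 0 1) := by
  set C := {x : ℝ | (a:ℝ) * x + s₁ ∈ A ∧ (c:ℝ) * x + s₂ ∈ B} with hC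
  have hCm : MeasurableSet C := meas_joint hA hB a c s₁ s₂
  have hCp : PerS C := per_joint hpA hpB a c s₁ s₂
  have hset : {x : ℝ | (a:ℝ) * x + (s₁ + a * r) ∈ A ∧ (c:ℝ) * x + (s₂ + c * r) ∈ B} ∩ Ioc 0 1
      = (fun x => x + r) ⁻¹' (C ∩ Ioc r (r + 1)) := by
    ext x
    simp only [Set.mem_inter_iff, Set.mem_setOf_eq, Set.mem_Ioc, Set.mem_preimage, hC]
    constructor
    · rintro ⟨⟨h1, h2⟩, h3, h4⟩
      refine ⟨⟨?_, ?_⟩, by linarith, by linarith⟩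
      · rw [show (a:ℝ)*(x+r) + s₁ = (a:ℝ)*x + (s₁ + a*r) by ring]; exact h1
      · rw [show (c:ℝ)*(x+r) + s₂ = (c:ℝ)*x + (s₂ + c*r) by ring]; exact h2
    · rintro ⟨⟨h1, h2⟩, h3, h4⟩
      refine ⟨⟨?_, ?_⟩, by linarith, by linarith⟩
      · rw [show (a:ℝ)*x + (s₁ + a*r) = (a:ℝ)*(x+r) + s₁ by ring]; exact h1
      · rw [show (c:ℝ)*x + (s₂ + c*r) = (c:ℝ)*(x+r) + s₂ by ring]; exact h2
  rw [hset, vol_preimage_add, hCp.vol_window hCm r]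

/-- Auxiliary 2D set. -/
def S2 (A B : Set ℝ) (s t : ℝ) (a b c e : ℤ) : Set (ℝ × ℝ) :=
  {p | p.1 ∈ Ioc (0:ℝ) 1 ∧ p.2 ∈ Ioc (0:ℝ) 1 ∧ ((a:ℝ) * p.2 + (b:ℝ) * p.1 + s ∈ A) ∧
    ((c:ℝ) * p.2 + (e:ℝ) * p.1 + t ∈ B)}

lemma meas_S2 {A B : Set ℝ} (hA : MeasurableSet A) (hB : MeasurableSet B) (s t : ℝ)
    (a b c e : ℤ) : MeasurableSet (S2 A B s t a b c e) := by
  have h1 : MeasurableSet ((fun p : ℝ × ℝ => (a:ℝ) * p.2 + (b:ℝ) * p.1 + s) ⁻¹' A) :=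
    hA.preimage (by fun_prop)
  have h2 : MeasurableSet ((fun p : ℝ × ℝ => (c:ℝ) * p.2 + (e:ℝ) * p.1 + t) ⁻¹' B) :=
    hB.preimage (by fun_prop)
  exact ((measurable_fst measurableSet_Ioc).inter
    ((measurable_snd measurableSet_Ioc).inter (h1.inter h2)))

lemma vol_S2 {A B : Set ℝ} (hA : MeasurableSet A) (hB : MeasurableSet B) (s t : ℝ)
    (a b c e : ℤ) :
    volume (S2 A B s t a b c e)
      = ∫⁻ y in Ioc (0:ℝ) 1,
          volume ({x : ℝ | (a:ℝ) * x + (b:ℝ) * y + s ∈ A ∧ (c:ℝ) * x + (e:ℝ) * y + t ∈ B}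
            ∩ Ioc 0 1) := by
  rw [Measure.volume_eq_prod, Measure.prod_apply (meas_S2 hA hB s t a b c e),
    ← lintegral_indicator measurableSet_Ioc]
  apply lintegral_congr
  intro y
  by_cases hy : y ∈ Ioc (0:ℝ) 1
  · rw [Set.indicator_of_mem hy]
    congr 1
    ext x
    simp only [Set.mem_preimage, S2, Set.mem_setOf_eq, Set.mem_inter_iff]
    tauto
  · rw [Set.indicator_of_notMem hy]
    have : Prod.mk y ⁻¹' S2 A B s t a b c e = ∅ := by
      ext x
      simp only [Set.mem_preimage, S2, Set.mem_setOf_eq, Set.mem_empty_iff_false, iff_false]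
      rintro ⟨h1, -⟩
      exact hy h1
    rw [this]
    simp

lemma vol_S2_swap {A B : Set ℝ} (hA : MeasurableSet A) (hB : MeasurableSet B) (s t : ℝ)
    (a b c e : ℤ) :
    volume (S2 A B s t b a e c) = volume (S2 A B s t a b c e) := by
  have hswap : Prod.swap ⁻¹' (S2 A B s t a b c e) = S2 A B s t b a e c := by
    ext p
    simp only [Set.mem_preimage, S2, Set.mem_setOf_eq, Prod.fst_swap, Prod.snd_swap]
    constructor
    · rintro ⟨h1, h2, h3, h4⟩
      refine ⟨h2, h1, ?_, ?_⟩
      · rw [show (b:ℝ)*p.2 + (a:ℝ)*p.1 + s = (a:ℝ)*p.1 + (b:ℝ)*p.2 + s by ring]; exact h3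
      · rw [show (e:ℝ)*p.2 + (c:ℝ)*p.1 + t = (c:ℝ)*p.1 + (e:ℝ)*p.2 + t by ring]; exact h4
    · rintro ⟨h1, h2, h3, h4⟩
      refine ⟨h2, h1, ?_, ?_⟩
      · rw [show (a:ℝ)*p.1 + (b:ℝ)*p.2 + s = (b:ℝ)*p.2 + (a:ℝ)*p.1 + s by ring]; exact h3
      · rw [show (c:ℝ)*p.1 + (e:ℝ)*p.2 + t = (e:ℝ)*p.2 + (c:ℝ)*p.1 + t by ring]; exact h4
  have key := (Measure.measurePreserving_swap (μ := (volume : Measure ℝ))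
    (ν := (volume : Measure ℝ))).measure_preimage
    (meas_S2 hA hB s t a b c e).nullMeasurableSet
  rw [Measure.volume_eq_prod, ← hswap]
  exact key

lemma vol_S2_shear {A B : Set ℝ} (hA : MeasurableSet A) (hB : MeasurableSet B)
    (hpA : PerS A) (hpB : PerS B) (s t : ℝ) (a b c e k : ℤ) :
    volume (S2 A B s t a (b + k * a) c (e + k * c)) = volume (S2 A B s t a b c e) := by
  rw [vol_S2 hA hB, vol_S2 hA hB]
  apply lintegral_congr
  intro y
  -- rewrite LHS set into Gshift form
  have e1 : {x : ℝ | (a:ℝ) * x + ((b + k*a : ℤ):ℝ) * y + s ∈ A ∧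
      (c:ℝ) * x + ((e + k*c : ℤ):ℝ) * y + t ∈ B}
      = {x : ℝ | (a:ℝ) * x + (((b:ℝ) * y + s) + (a:ℝ) * ((k:ℝ) * y)) ∈ A ∧
        (c:ℝ) * x + (((e:ℝ) * y + t) + (c:ℝ) * ((k:ℝ) * y)) ∈ B} := by
    ext x
    have r1 : (a:ℝ) * x + ((b + k*a : ℤ):ℝ) * y + s
        = (a:ℝ) * x + (((b:ℝ) * y + s) + (a:ℝ) * ((k:ℝ) * y)) := by push_cast; ring
    have r2 : (c:ℝ) * x + ((e + k*c : ℤ):ℝ) * y + t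
        = (c:ℝ) * x + (((e:ℝ) * y + t) + (c:ℝ) * ((k:ℝ) * y)) := by push_cast; ring
    rw [Set.mem_setOf_eq, Set.mem_setOf_eq, r1, r2]
  have e2 : {x : ℝ | (a:ℝ) * x + (b:ℝ) * y + s ∈ A ∧ (c:ℝ) * x + (e:ℝ) * y + t ∈ B}
      = {x : ℝ | (a:ℝ) * x + ((b:ℝ) * y + s) ∈ A ∧ (c:ℝ) * x + ((e:ℝ) * y + t) ∈ B} := by
    ext x
    rw [Set.mem_setOf_eq, Set.mem_setOf_eq, add_assoc, add_assoc]
  rw [e1, e2, Gshift hA hB hpA hpB a c ((b:ℝ) * y + s) ((e:ℝ) * y + t) ((k:ℝ) * y)]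

lemma vol_S2_base {A B : Set ℝ} (hA : MeasurableSet A) (hB : MeasurableSet B)
    (hpA : PerS A) (hpB : PerS B) (s t : ℝ) (b c e : ℤ) (hb : b ≠ 0) (hc : c ≠ 0) :
    volume (S2 A B s t 0 b c e)
      = volume (A ∩ Ioc (0:ℝ) 1) * volume (B ∩ Ioc (0:ℝ) 1) := by
  rw [vol_S2 hA hB]
  have hpt : ∀ y : ℝ,
      volume ({x : ℝ | ((0:ℤ):ℝ) * x + (b:ℝ) * y + s ∈ A ∧ (c:ℝ) * x + (e:ℝ) * y + t ∈ B}
        ∩ Ioc 0 1)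
      = Set.indicator {y : ℝ | (b:ℝ) * y + s ∈ A} (fun _ => volume (B ∩ Ioc (0:ℝ) 1)) y := by
    intro y
    by_cases hy : (b:ℝ) * y + s ∈ A
    · rw [Set.indicator_of_mem (show y ∈ {y : ℝ | (b:ℝ) * y + s ∈ A} from hy)]
      have hset : {x : ℝ | ((0:ℤ):ℝ) * x + (b:ℝ) * y + s ∈ A ∧ (c:ℝ) * x + (e:ℝ) * y + t ∈ B}
          = {x : ℝ | (c:ℝ) * x + ((e:ℝ) * y + t) ∈ B} := by
        ext x
        simp only [Set.mem_setOf_eq, Int.cast_zero, zero_mul, zero_add, hy, true_and, add_assoc]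
      rw [hset, hpB.vol_scale hB hc ((e:ℝ) * y + t)]
    · rw [Set.indicator_of_notMem (show y ∉ {y : ℝ | (b:ℝ) * y + s ∈ A} from hy)]
      have hset : {x : ℝ | ((0:ℤ):ℝ) * x + (b:ℝ) * y + s ∈ A ∧ (c:ℝ) * x + (e:ℝ) * y + t ∈ B}
          = ∅ := by
        ext x
        simp only [Set.mem_setOf_eq, Int.cast_zero, zero_mul, zero_add,
          Set.mem_empty_iff_false, iff_false]
        rintro ⟨h1, -⟩
        exact hy h1
      rw [hset]
      simp
  rw [lintegral_congr fun y => hpt y]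
  rw [lintegral_indicator (meas_affine hA (b:ℝ) s)]
  rw [setLIntegral_const, Measure.restrict_apply (meas_affine hA (b:ℝ) s),
    hpA.vol_scale hA hb s]
  ring

lemma vol_S2_det {A B : Set ℝ} (hA : MeasurableSet A) (hB : MeasurableSet B)
    (hpA : PerS A) (hpB : PerS B) (s t : ℝ) :
    ∀ (N : ℕ) (a b c e : ℤ), a.natAbs = N → a * e - c * b ≠ 0 →
      volume (S2 A B s t a b c e)
        = volume (A ∩ Ioc (0:ℝ) 1) * volume (B ∩ Ioc (0:ℝ) 1) := by
  intro N
  induction N using Nat.strong_induction_on with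
  | _ N ih =>
    intro a b c e hN hdet
    by_cases ha : a = 0
    · subst ha
      have hc : c ≠ 0 := by intro h; apply hdet; rw [h]; ring
      have hb : b ≠ 0 := by intro h; apply hdet; rw [h]; ring
      exact vol_S2_base hA hB hpA hpB s t b c e hb hc
    · set k : ℤ := -(b / a) with hk
      have hb' : b + k * a = b % a := by rw [Int.emod_def]; ring
      have h1 : volume (S2 A B s t a b c e) = volume (S2 A B s t a (b % a) c (e + k * c)) := by
        rw [← hb']
        exact (vol_S2_shear hA hB hpA hpB s t a b c e k).symm
      rw [h1, ← vol_S2_swap hA hB s t a (b % a) c (e + k * c)]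
      have hlt : (b % a).natAbs < N := by
        rw [← hN]
        have h1' := Int.emod_nonneg b ha
        have h3 : b % a < |a| := by have := Int.emod_lt b ha; rw [Int.abs_eq_natAbs]; exact this
        rw [Int.abs_eq_natAbs] at h3
        omega
      apply ih _ hlt _ _ _ _ rfl
      have : (b % a) * c - (e + k * c) * a = -(a * e - c * b) := by
        rw [Int.emod_def]; ring
      rw [this]
      intro h
      apply hdet
      omega

lemma lem2D {A B : Set ℝ} (hA : MeasurableSet A) (hB : MeasurableSet B)
    (hpA : PerS A) (hpB : PerS B) (s t : ℝ) (a b c e : ℤ) (hdet : a * e - c * b ≠ 0) :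
    (∫⁻ y in Ioc (0:ℝ) 1,
        volume ({x : ℝ | (a:ℝ) * x + (b:ℝ) * y + s ∈ A ∧ (c:ℝ) * x + (e:ℝ) * y + t ∈ B}
          ∩ Ioc 0 1))
      = volume (A ∩ Ioc (0:ℝ) 1) * volume (B ∩ Ioc (0:ℝ) 1) := by
  rw [← vol_S2 hA hB s t a b c e]
  exact vol_S2_det hA hB hpA hpB s t a.natAbs a b c e rfl hdet

lemma meas_sum_affine {d : ℕ} {A : Set ℝ} (hA : MeasurableSet A) (w : Fin d → ℤ) (c : ℝ) :
    MeasurableSet {β : Fin d → ℝ | (∑ j, (w j : ℝ) * β j) + c ∈ A} := by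
  apply hA.preimage
  apply Measurable.add_const
  exact Finset.measurable_sum _ fun j _ => (measurable_pi_apply j).const_mul _

lemma vol_box {d : ℕ} : volume {β : Fin d → ℝ | ∀ j, β j ∈ Icc (0:ℝ) 1} = 1 := by
  have : {β : Fin d → ℝ | ∀ j, β j ∈ Icc (0:ℝ) 1} = Set.pi Set.univ (fun _ => Icc (0:ℝ) 1) := by
    ext β; rw [Set.mem_setOf_eq, Set.mem_univ_pi]
  rw [this, volume_pi_pi]
  simp [Real.volume_Icc]

lemma meas_box {d : ℕ} : MeasurableSet {β : Fin d → ℝ | ∀ j, β j ∈ Icc (0:ℝ) 1} := by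
  have : {β : Fin d → ℝ | ∀ j, β j ∈ Icc (0:ℝ) 1} = Set.pi Set.univ (fun _ => Icc (0:ℝ) 1) := by
    ext β; rw [Set.mem_setOf_eq, Set.mem_univ_pi]
  rw [this]
  exact MeasurableSet.univ_pi fun _ => measurableSet_Icc

/-- Lemma A : the distribution of `w · α + s` mod 1 over the unit box is uniform. -/
lemma vol_single : ∀ (d : ℕ) (w : Fin d → ℤ), (∃ i, w i ≠ 0) → ∀ (s : ℝ) (A : Set ℝ),
    MeasurableSet A → PerS A →
    volume {α : Fin d → ℝ | (∀ i, α i ∈ Icc (0:ℝ) 1) ∧ (∑ i, (w i : ℝ) * α i) + s ∈ A}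
      = volume (A ∩ Ioc (0:ℝ) 1) := by
  intro d
  induction d with
  | zero => rintro w ⟨i, -⟩; exact i.elim0
  | succ d ihd =>
    intro w hw s A hA hp
    set T : Set (ℝ × (Fin d → ℝ)) := {p | (p.1 ∈ Icc (0:ℝ) 1 ∧ ∀ j, p.2 j ∈ Icc (0:ℝ) 1) ∧
      (∑ j, (w (Fin.succ j) : ℝ) * p.2 j) + ((w 0 : ℝ) * p.1 + s) ∈ A} with hT
    have hTm : MeasurableSet T := by
      have hTeq : T = (Prod.fst ⁻¹' Icc (0:ℝ) 1)
          ∩ (Prod.snd ⁻¹' {β : Fin d → ℝ | ∀ j, β j ∈ Icc (0:ℝ) 1})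
          ∩ ((fun p : ℝ × (Fin d → ℝ) =>
              (∑ j, (w (Fin.succ j) : ℝ) * p.2 j) + ((w 0 : ℝ) * p.1 + s)) ⁻¹' A) := by
        ext p
        simp only [hT, Set.mem_setOf_eq, Set.mem_inter_iff, Set.mem_preimage]
      rw [hTeq]
      refine MeasurableSet.inter (MeasurableSet.inter ?_ ?_) ?_
      · exact measurable_fst measurableSet_Icc
      · exact measurable_snd meas_box
      · apply hA.preimage
        apply Measurable.add
        · exact Finset.measurable_sum _ fun j _ =>
            ((measurable_pi_apply j).comp measurable_snd).const_mul _
        · exact (measurable_fst.const_mul _).add_const _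
    have hS : {α : Fin (d+1) → ℝ | (∀ i, α i ∈ Icc (0:ℝ) 1) ∧ (∑ i, (w i : ℝ) * α i) + s ∈ A}
        = (MeasurableEquiv.piFinSuccAbove (fun _ : Fin (d+1) => ℝ) 0) ⁻¹' T := by
      ext α
      simp only [Set.mem_setOf_eq, Set.mem_preimage, MeasurableEquiv.piFinSuccAbove_apply,
        Fin.insertNthEquiv_symm_apply, Fin.removeNth, hT, Fin.zero_succAbove]
      rw [Fin.forall_fin_succ (P := fun i => α i ∈ Icc (0:ℝ) 1), Fin.sum_univ_succ]
      constructor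
      · rintro ⟨⟨h0, h1⟩, h2⟩
        refine ⟨⟨h0, h1⟩, ?_⟩
        rw [show (∑ j, (w (Fin.succ j) : ℝ) * α (Fin.succ j)) + ((w 0 : ℝ) * α 0 + s)
          = ((w 0 : ℝ) * α 0 + ∑ j, (w (Fin.succ j) : ℝ) * α (Fin.succ j)) + s by ring]
        exact h2
      · rintro ⟨⟨h0, h1⟩, h2⟩
        refine ⟨⟨h0, h1⟩, ?_⟩
        rw [show ((w 0 : ℝ) * α 0 + ∑ j, (w (Fin.succ j) : ℝ) * α (Fin.succ j)) + s
          = (∑ j, (w (Fin.succ j) : ℝ) * α (Fin.succ j)) + ((w 0 : ℝ) * α 0 + s) by ring]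
        exact h2
    rw [hS, (volume_preserving_piFinSuccAbove (fun _ : Fin (d+1) => ℝ) 0).measure_preimage
      hTm.nullMeasurableSet]
    rw [Measure.volume_eq_prod, Measure.prod_apply hTm]
    by_cases hw' : ∃ j, w (Fin.succ j) ≠ 0
    · -- inner vector still nonzero
      have hpt : ∀ y : ℝ, volume (Prod.mk y ⁻¹' T)
          = Set.indicator (Icc (0:ℝ) 1) (fun _ => volume (A ∩ Ioc (0:ℝ) 1)) y := by
        intro y
        by_cases hy : y ∈ Icc (0:ℝ) 1
        · rw [Set.indicator_of_mem hy]
          have : Prod.mk y ⁻¹' T = {β : Fin d → ℝ | (∀ j, β j ∈ Icc (0:ℝ) 1) ∧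
              (∑ j, (w (Fin.succ j) : ℝ) * β j) + ((w 0 : ℝ) * y + s) ∈ A} := by
            ext β
            simp only [Set.mem_preimage, hT, Set.mem_setOf_eq]
            tauto
          rw [this, ihd (fun j => w (Fin.succ j)) hw' ((w 0 : ℝ) * y + s) A hA hp]
        · rw [Set.indicator_of_notMem hy]
          have : Prod.mk y ⁻¹' T = ∅ := by
            ext β
            simp only [Set.mem_preimage, hT, Set.mem_setOf_eq, Set.mem_empty_iff_false, iff_false]
            rintro ⟨⟨h1, -⟩, -⟩
            exact hy h1
          rw [this]; simp
      rw [lintegral_congr hpt, lintegral_indicator measurableSet_Icc, setLIntegral_const,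
        Real.volume_Icc]
      simp
    · -- only the first coordinate counts
      push_neg at hw'
      have hw0 : w 0 ≠ 0 := by
        obtain ⟨i, hi⟩ := hw
        rcases Fin.eq_zero_or_eq_succ i with h0 | ⟨j, rfl⟩
        · rwa [h0] at hi
        · exact absurd (hw' j) hi
      have hpt : ∀ y : ℝ, volume (Prod.mk y ⁻¹' T)
          = Set.indicator ({y : ℝ | (w 0 : ℝ) * y + s ∈ A} ∩ Icc (0:ℝ) 1) (fun _ => 1) y := by
        intro y
        by_cases hy : y ∈ {y : ℝ | (w 0 : ℝ) * y + s ∈ A} ∩ Icc (0:ℝ) 1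
        · rw [Set.indicator_of_mem hy]
          obtain ⟨hyA, hyI⟩ := hy
          have : Prod.mk y ⁻¹' T = {β : Fin d → ℝ | ∀ j, β j ∈ Icc (0:ℝ) 1} := by
            ext β
            simp only [Set.mem_preimage, hT, Set.mem_setOf_eq]
            constructor
            · rintro ⟨⟨-, h1⟩, -⟩; exact h1
            · intro h1
              refine ⟨⟨hyI, h1⟩, ?_⟩
              rw [show (∑ j, (w (Fin.succ j) : ℝ) * β j) = 0 by
                apply Finset.sum_eq_zero; intro j _; rw [hw' j]; simp]
              rw [zero_add]
              exact hyA
          rw [this, vol_box]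
        · rw [Set.indicator_of_notMem hy]
          have : Prod.mk y ⁻¹' T = ∅ := by
            ext β
            simp only [Set.mem_preimage, hT, Set.mem_setOf_eq, Set.mem_empty_iff_false, iff_false]
            rintro ⟨⟨h1, h1'⟩, h2⟩
            apply hy
            refine ⟨?_, h1⟩
            rw [show (∑ j, (w (Fin.succ j) : ℝ) * β j) = 0 by
              apply Finset.sum_eq_zero; intro j _; rw [hw' j]; simp] at h2
            rw [zero_add] at h2
            exact h2
          rw [this]; simp
      rw [lintegral_congr hpt,
        lintegral_indicator ((meas_affine hA _ _).inter measurableSet_Icc),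
        setLIntegral_const, one_mul]
      have := vol_inter_Icc_eq_Ioc {y : ℝ | (w 0 : ℝ) * y + s ∈ A}
      rw [this, hp.vol_scale hA hw0 s]

/-- Lemma B : joint equidistribution for independent integer vectors. -/
lemma vol_pair : ∀ (d : ℕ) (u v : Fin d → ℤ),
    (∀ p q : ℤ, (∀ i, p * u i = q * v i) → p = 0 ∧ q = 0) →
    ∀ (s t : ℝ) (A B : Set ℝ), MeasurableSet A → MeasurableSet B → PerS A → PerS B →
    volume {α : Fin d → ℝ | (∀ i, α i ∈ Icc (0:ℝ) 1) ∧ (∑ i, (u i : ℝ) * α i) + s ∈ A ∧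
        (∑ i, (v i : ℝ) * α i) + t ∈ B}
      = volume (A ∩ Ioc (0:ℝ) 1) * volume (B ∩ Ioc (0:ℝ) 1) := by
  intro d
  induction d with
  | zero =>
    intro u v hindep s t A B hA hB hpA hpB
    exfalso
    have := hindep 1 0 (fun i => i.elim0)
    exact one_ne_zero this.1
  | succ d ihd =>
    intro u v hindep s t A B hA hB hpA hpB
    have hune : ¬(∀ i, u i = 0) := by
      intro h
      have := (hindep 1 0 (fun i => by rw [h i]; ring)).1
      exact one_ne_zero this
    have hvne : ¬(∀ i, v i = 0) := by
      intro h
      have := (hindep 0 1 (fun i => by rw [h i]; ring)).2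
      exact one_ne_zero this
    set T : Set (ℝ × (Fin d → ℝ)) := {p | (p.1 ∈ Icc (0:ℝ) 1 ∧ ∀ j, p.2 j ∈ Icc (0:ℝ) 1) ∧
      ((∑ j, (u (Fin.succ j) : ℝ) * p.2 j) + ((u 0 : ℝ) * p.1 + s) ∈ A) ∧
      ((∑ j, (v (Fin.succ j) : ℝ) * p.2 j) + ((v 0 : ℝ) * p.1 + t) ∈ B)} with hT
    have hTm : MeasurableSet T := by
      have hTeq : T = (Prod.fst ⁻¹' Icc (0:ℝ) 1)
          ∩ (Prod.snd ⁻¹' {β : Fin d → ℝ | ∀ j, β j ∈ Icc (0:ℝ) 1})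
          ∩ (((fun p : ℝ × (Fin d → ℝ) =>
              (∑ j, (u (Fin.succ j) : ℝ) * p.2 j) + ((u 0 : ℝ) * p.1 + s)) ⁻¹' A)
          ∩ ((fun p : ℝ × (Fin d → ℝ) =>
              (∑ j, (v (Fin.succ j) : ℝ) * p.2 j) + ((v 0 : ℝ) * p.1 + t)) ⁻¹' B)) := by
        ext p
        simp only [hT, Set.mem_setOf_eq, Set.mem_inter_iff, Set.mem_preimage]
      rw [hTeq]
      have hmap : ∀ (w : Fin (d+1) → ℤ) (c : ℝ), Measurable (fun p : ℝ × (Fin d → ℝ) =>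
          (∑ j, (w (Fin.succ j) : ℝ) * p.2 j) + ((w 0 : ℝ) * p.1 + c)) := by
        intro w c
        apply Measurable.add
        · exact Finset.measurable_sum _ fun j _ =>
            ((measurable_pi_apply j).comp measurable_snd).const_mul _
        · exact (measurable_fst.const_mul _).add_const _
      exact (((measurable_fst measurableSet_Icc).inter (measurable_snd meas_box)).inter
        ((hA.preimage (hmap u s)).inter (hB.preimage (hmap v t))))
    have hS : {α : Fin (d+1) → ℝ | (∀ i, α i ∈ Icc (0:ℝ) 1) ∧ (∑ i, (u i : ℝ) * α i) + s ∈ A ∧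
        (∑ i, (v i : ℝ) * α i) + t ∈ B}
        = (MeasurableEquiv.piFinSuccAbove (fun _ : Fin (d+1) => ℝ) 0) ⁻¹' T := by
      ext α
      simp only [Set.mem_setOf_eq, Set.mem_preimage, MeasurableEquiv.piFinSuccAbove_apply,
        Fin.insertNthEquiv_symm_apply, Fin.removeNth, hT, Fin.zero_succAbove]
      rw [Fin.forall_fin_succ (P := fun i => α i ∈ Icc (0:ℝ) 1), Fin.sum_univ_succ
        (f := fun i => (u i : ℝ) * α i), Fin.sum_univ_succ (f := fun i => (v i : ℝ) * α i)]
      constructor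
      · rintro ⟨⟨h0, h1⟩, h2, h3⟩
        refine ⟨⟨h0, h1⟩, ?_, ?_⟩
        · rw [show (∑ j, (u (Fin.succ j) : ℝ) * α (Fin.succ j)) + ((u 0 : ℝ) * α 0 + s)
            = ((u 0 : ℝ) * α 0 + ∑ j, (u (Fin.succ j) : ℝ) * α (Fin.succ j)) + s by ring]
          exact h2
        · rw [show (∑ j, (v (Fin.succ j) : ℝ) * α (Fin.succ j)) + ((v 0 : ℝ) * α 0 + t)
            = ((v 0 : ℝ) * α 0 + ∑ j, (v (Fin.succ j) : ℝ) * α (Fin.succ j)) + t by ring]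
          exact h3
      · rintro ⟨⟨h0, h1⟩, h2, h3⟩
        refine ⟨⟨h0, h1⟩, ?_, ?_⟩
        · rw [show ((u 0 : ℝ) * α 0 + ∑ j, (u (Fin.succ j) : ℝ) * α (Fin.succ j)) + s
            = (∑ j, (u (Fin.succ j) : ℝ) * α (Fin.succ j)) + ((u 0 : ℝ) * α 0 + s) by ring]
          exact h2
        · rw [show ((v 0 : ℝ) * α 0 + ∑ j, (v (Fin.succ j) : ℝ) * α (Fin.succ j)) + t
            = (∑ j, (v (Fin.succ j) : ℝ) * α (Fin.succ j)) + ((v 0 : ℝ) * α 0 + t) by ring]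
          exact h3
    rw [hS, (volume_preserving_piFinSuccAbove (fun _ : Fin (d+1) => ℝ) 0).measure_preimage
      hTm.nullMeasurableSet]
    rw [Measure.volume_eq_prod, Measure.prod_apply hTm]
    -- slice description
    have hslice : ∀ y : ℝ, y ∈ Icc (0:ℝ) 1 → Prod.mk y ⁻¹' T
        = {β : Fin d → ℝ | (∀ j, β j ∈ Icc (0:ℝ) 1) ∧
            (∑ j, (u (Fin.succ j) : ℝ) * β j) + ((u 0 : ℝ) * y + s) ∈ A ∧
            (∑ j, (v (Fin.succ j) : ℝ) * β j) + ((v 0 : ℝ) * y + t) ∈ B} := by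
      intro y hy
      ext β
      simp only [Set.mem_preimage, hT, Set.mem_setOf_eq]
      tauto
    have hslice0 : ∀ y : ℝ, y ∉ Icc (0:ℝ) 1 → Prod.mk y ⁻¹' T = ∅ := by
      intro y hy
      ext β
      simp only [Set.mem_preimage, hT, Set.mem_setOf_eq, Set.mem_empty_iff_false, iff_false]
      rintro ⟨⟨h1, -⟩, -⟩
      exact hy h1
    by_cases hsub : ∀ p q : ℤ, (∀ j, p * u (Fin.succ j) = q * v (Fin.succ j)) → p = 0 ∧ q = 0
    · -- truncations independent : inner measure is constant
      have hpt : ∀ y : ℝ, volume (Prod.mk y ⁻¹' T)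
          = Set.indicator (Icc (0:ℝ) 1)
            (fun _ => volume (A ∩ Ioc (0:ℝ) 1) * volume (B ∩ Ioc (0:ℝ) 1)) y := by
        intro y
        by_cases hy : y ∈ Icc (0:ℝ) 1
        · rw [Set.indicator_of_mem hy, hslice y hy,
            ihd (fun j => u (Fin.succ j)) (fun j => v (Fin.succ j)) hsub
              ((u 0 : ℝ) * y + s) ((v 0 : ℝ) * y + t) A B hA hB hpA hpB]
        · rw [Set.indicator_of_notMem hy, hslice0 y hy]; simp
      rw [lintegral_congr hpt, lintegral_indicator measurableSet_Icc, setLIntegral_const,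
        Real.volume_Icc]
      simp
    · -- truncations dependent
      push_neg at hsub
      obtain ⟨p, q, hpq, hpq0⟩ := hsub
      by_cases hu'0 : ∀ j, u (Fin.succ j) = 0
      · by_cases hv'0 : ∀ j, v (Fin.succ j) = 0
        · -- both truncations vanish : contradiction with independence
          exfalso
          have : ∀ i, v 0 * u i = u 0 * v i := by
            intro i
            induction i using Fin.cases with
            | zero => ring
            | succ j => rw [hu'0 j, hv'0 j]; ring
          have h2 := hindep (v 0) (u 0) this
          apply hune
          intro i
          induction i using Fin.cases with
          | zero => exact h2.2
          | succ j => exact hu'0 j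
        · -- u-truncation vanishes, v-truncation does not
          push_neg at hv'0
          have hu0 : u 0 ≠ 0 := by
            intro h
            apply hune
            intro i
            induction i using Fin.cases with
            | zero => exact h
            | succ j => exact hu'0 j
          have hpt : ∀ y : ℝ, volume (Prod.mk y ⁻¹' T)
              = Set.indicator ({y : ℝ | (u 0 : ℝ) * y + s ∈ A} ∩ Icc (0:ℝ) 1)
                (fun _ => volume (B ∩ Ioc (0:ℝ) 1)) y := by
            intro y
            by_cases hy : y ∈ Icc (0:ℝ) 1
            · by_cases hyA : (u 0 : ℝ) * y + s ∈ A
              · rw [Set.indicator_of_mem (Set.mem_inter (show y ∈ {y : ℝ | (u 0 : ℝ) * y + s ∈ A} from hyA) hy), hslice y hy]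
                have heq : {β : Fin d → ℝ | (∀ j, β j ∈ Icc (0:ℝ) 1) ∧
                    (∑ j, (u (Fin.succ j) : ℝ) * β j) + ((u 0 : ℝ) * y + s) ∈ A ∧
                    (∑ j, (v (Fin.succ j) : ℝ) * β j) + ((v 0 : ℝ) * y + t) ∈ B}
                    = {β : Fin d → ℝ | (∀ j, β j ∈ Icc (0:ℝ) 1) ∧
                    (∑ j, (v (Fin.succ j) : ℝ) * β j) + ((v 0 : ℝ) * y + t) ∈ B} := by
                  ext β
                  simp only [Set.mem_setOf_eq]
                  constructor
                  · rintro ⟨h1, -, h3⟩; exact ⟨h1, h3⟩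
                  · rintro ⟨h1, h3⟩
                    refine ⟨h1, ?_, h3⟩
                    rw [show (∑ j, (u (Fin.succ j) : ℝ) * β j) = 0 by
                      apply Finset.sum_eq_zero; intro j _; rw [hu'0 j]; simp]
                    rw [zero_add]
                    exact hyA
                rw [heq, vol_single d (fun j => v (Fin.succ j)) hv'0 ((v 0 : ℝ) * y + t) B hB hpB]
              · rw [Set.indicator_of_notMem (by
                  intro hmem
                  exact hyA hmem.1), hslice y hy]
                have heq : {β : Fin d → ℝ | (∀ j, β j ∈ Icc (0:ℝ) 1) ∧
                    (∑ j, (u (Fin.succ j) : ℝ) * β j) + ((u 0 : ℝ) * y + s) ∈ A ∧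
                    (∑ j, (v (Fin.succ j) : ℝ) * β j) + ((v 0 : ℝ) * y + t) ∈ B} = ∅ := by
                  ext β
                  simp only [Set.mem_setOf_eq, Set.mem_empty_iff_false, iff_false]
                  rintro ⟨h1, h2, -⟩
                  apply hyA
                  rw [show (∑ j, (u (Fin.succ j) : ℝ) * β j) = 0 by
                    apply Finset.sum_eq_zero; intro j _; rw [hu'0 j]; simp] at h2
                  rw [zero_add] at h2
                  exact h2
                rw [heq]; simp
            · rw [Set.indicator_of_notMem (by
                intro hmem
                exact hy hmem.2), hslice0 y hy]
              simp
          rw [lintegral_congr hpt,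
            lintegral_indicator ((meas_affine hA _ _).inter measurableSet_Icc),
            setLIntegral_const, vol_inter_Icc_eq_Ioc, hpA.vol_scale hA hu0 s]
          ring
      · push_neg at hu'0
        by_cases hv'0 : ∀ j, v (Fin.succ j) = 0
        · -- v-truncation vanishes, u-truncation does not (symmetric)
          have hv0 : v 0 ≠ 0 := by
            intro h
            apply hvne
            intro i
            induction i using Fin.cases with
            | zero => exact h
            | succ j => exact hv'0 j
          have hpt : ∀ y : ℝ, volume (Prod.mk y ⁻¹' T)
              = Set.indicator ({y : ℝ | (v 0 : ℝ) * y + t ∈ B} ∩ Icc (0:ℝ) 1)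
                (fun _ => volume (A ∩ Ioc (0:ℝ) 1)) y := by
            intro y
            by_cases hy : y ∈ Icc (0:ℝ) 1
            · by_cases hyB : (v 0 : ℝ) * y + t ∈ B
              · rw [Set.indicator_of_mem (Set.mem_inter (show y ∈ {y : ℝ | (v 0 : ℝ) * y + t ∈ B} from hyB) hy), hslice y hy]
                have heq : {β : Fin d → ℝ | (∀ j, β j ∈ Icc (0:ℝ) 1) ∧
                    (∑ j, (u (Fin.succ j) : ℝ) * β j) + ((u 0 : ℝ) * y + s) ∈ A ∧
                    (∑ j, (v (Fin.succ j) : ℝ) * β j) + ((v 0 : ℝ) * y + t) ∈ B}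
                    = {β : Fin d → ℝ | (∀ j, β j ∈ Icc (0:ℝ) 1) ∧
                    (∑ j, (u (Fin.succ j) : ℝ) * β j) + ((u 0 : ℝ) * y + s) ∈ A} := by
                  ext β
                  simp only [Set.mem_setOf_eq]
                  constructor
                  · rintro ⟨h1, h2, -⟩; exact ⟨h1, h2⟩
                  · rintro ⟨h1, h2⟩
                    refine ⟨h1, h2, ?_⟩
                    rw [show (∑ j, (v (Fin.succ j) : ℝ) * β j) = 0 by
                      apply Finset.sum_eq_zero; intro j _; rw [hv'0 j]; simp]
                    rw [zero_add]
                    exact hyB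
                rw [heq, vol_single d (fun j => u (Fin.succ j)) hu'0 ((u 0 : ℝ) * y + s) A hA hpA]
              · rw [Set.indicator_of_notMem (by
                  intro hmem
                  exact hyB hmem.1), hslice y hy]
                have heq : {β : Fin d → ℝ | (∀ j, β j ∈ Icc (0:ℝ) 1) ∧
                    (∑ j, (u (Fin.succ j) : ℝ) * β j) + ((u 0 : ℝ) * y + s) ∈ A ∧
                    (∑ j, (v (Fin.succ j) : ℝ) * β j) + ((v 0 : ℝ) * y + t) ∈ B} = ∅ := by
                  ext β
                  simp only [Set.mem_setOf_eq, Set.mem_empty_iff_false, iff_false]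
                  rintro ⟨h1, -, h3⟩
                  apply hyB
                  rw [show (∑ j, (v (Fin.succ j) : ℝ) * β j) = 0 by
                    apply Finset.sum_eq_zero; intro j _; rw [hv'0 j]; simp] at h3
                  rw [zero_add] at h3
                  exact h3
                rw [heq]; simp
            · rw [Set.indicator_of_notMem (by
                intro hmem
                exact hy hmem.2), hslice0 y hy]
              simp
          rw [lintegral_congr hpt,
            lintegral_indicator ((meas_affine hB _ _).inter measurableSet_Icc),
            setLIntegral_const, vol_inter_Icc_eq_Ioc, hpB.vol_scale hB hv0 t]
        · -- both truncations nonzero and dependent : reduce to the 2D lemma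
          push_neg at hv'0
          have hp0 : p ≠ 0 := by
            intro hp
            obtain ⟨j0, hj0⟩ := hv'0
            have h1 := hpq j0
            rw [hp, zero_mul] at h1
            rcases mul_eq_zero.mp h1.symm with h | h
            · exact hpq0 hp h
            · exact hj0 h
          have hq0 : q ≠ 0 := by
            intro hq
            obtain ⟨j0, hj0⟩ := hu'0
            have h1 := hpq j0
            rw [hq, zero_mul] at h1
            rcases mul_eq_zero.mp h1 with h | h
            · exact hp0 h
            · exact hj0 h
          set g : ℤ := Finset.univ.gcd (fun j => u (Fin.succ j)) with hg
          have hgdvd : ∀ j, g ∣ u (Fin.succ j) := fun j => Finset.gcd_dvd (Finset.mem_univ j)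
          have hgne : g ≠ 0 := by
            intro h
            obtain ⟨j0, hj0⟩ := hu'0
            exact hj0 (Finset.gcd_eq_zero_iff.mp h j0 (Finset.mem_univ j0))
          set w : Fin d → ℤ := fun j => u (Fin.succ j) / g with hwdef
          have huw : ∀ j, u (Fin.succ j) = g * w j := fun j =>
            (Int.mul_ediv_cancel' (hgdvd j)).symm
          have hwne : ∃ j, w j ≠ 0 := by
            obtain ⟨j0, hj0⟩ := hu'0
            refine ⟨j0, fun h => hj0 ?_⟩
            rw [huw j0, h, mul_zero]
          have hgcdw : Finset.univ.gcd w = 1 := by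
            obtain ⟨j0, hj0⟩ := hu'0
            exact Finset.gcd_div_eq_one (f := fun j => u (Fin.succ j)) (Finset.mem_univ j0) hj0
          have hdvd1 : ∀ j, q ∣ (p * g) * w j := by
            intro j
            refine ⟨v (Fin.succ j), ?_⟩
            rw [mul_assoc, ← huw j, hpq j]
          have hqpg : q ∣ p * g := by
            have h2 : q ∣ Finset.univ.gcd (fun j => p * g * w j) :=
              Finset.dvd_gcd fun j _ => hdvd1 j
            rw [Finset.gcd_mul_left, hgcdw, mul_one] at h2
            exact dvd_normalize_iff.mp h2
          set bb : ℤ := p * g / q with hbb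
          have hpgqb : p * g = q * bb := (Int.mul_ediv_cancel' hqpg).symm
          have hvw : ∀ j, v (Fin.succ j) = bb * w j := by
            intro j
            apply mul_left_cancel₀ hq0
            rw [← hpq j, huw j, ← mul_assoc, hpgqb, mul_assoc]
          have hsumu : ∀ β : Fin d → ℝ, (∑ j, (u (Fin.succ j) : ℝ) * β j)
              = (g:ℝ) * ((∑ j, (w j : ℝ) * β j) + 0) := by
            intro β
            rw [add_zero, Finset.mul_sum]
            apply Finset.sum_congr rfl
            intro j _
            rw [huw j]
            push_cast
            ring
          have hsumv : ∀ β : Fin d → ℝ, (∑ j, (v (Fin.succ j) : ℝ) * β j)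
              = (bb:ℝ) * ((∑ j, (w j : ℝ) * β j) + 0) := by
            intro β
            rw [add_zero, Finset.mul_sum]
            apply Finset.sum_congr rfl
            intro j _
            rw [hvw j]
            push_cast
            ring
          have hpt : ∀ y : ℝ, volume (Prod.mk y ⁻¹' T)
              = Set.indicator (Icc (0:ℝ) 1) (fun y => volume
                ({x : ℝ | (g:ℝ) * x + ((u 0 : ℝ) * y + s) ∈ A ∧
                  (bb:ℝ) * x + ((v 0 : ℝ) * y + t) ∈ B} ∩ Ioc 0 1)) y := by
            intro y
            by_cases hy : y ∈ Icc (0:ℝ) 1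
            · rw [Set.indicator_of_mem hy, hslice y hy]
              have heq : {β : Fin d → ℝ | (∀ j, β j ∈ Icc (0:ℝ) 1) ∧
                  (∑ j, (u (Fin.succ j) : ℝ) * β j) + ((u 0 : ℝ) * y + s) ∈ A ∧
                  (∑ j, (v (Fin.succ j) : ℝ) * β j) + ((v 0 : ℝ) * y + t) ∈ B}
                  = {β : Fin d → ℝ | (∀ j, β j ∈ Icc (0:ℝ) 1) ∧
                    (∑ j, (w j : ℝ) * β j) + 0 ∈ {x : ℝ | (g:ℝ) * x + ((u 0 : ℝ) * y + s) ∈ A ∧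
                      (bb:ℝ) * x + ((v 0 : ℝ) * y + t) ∈ B}} := by
                ext β
                simp only [Set.mem_setOf_eq]
                constructor
                · rintro ⟨h1, h2, h3⟩
                  refine ⟨h1, ?_, ?_⟩
                  · rw [← hsumu β]; exact h2
                  · rw [← hsumv β]; exact h3
                · rintro ⟨h1, h2, h3⟩
                  refine ⟨h1, ?_, ?_⟩
                  · rw [hsumu β]; exact h2
                  · rw [hsumv β]; exact h3
              rw [heq, vol_single d w hwne 0 _ (meas_joint hA hB g bb ((u 0 : ℝ) * y + s)
                ((v 0 : ℝ) * y + t)) (per_joint hpA hpB g bb ((u 0 : ℝ) * y + s)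
                ((v 0 : ℝ) * y + t))]
            · rw [Set.indicator_of_notMem hy, hslice0 y hy]; simp
          rw [lintegral_congr hpt, lintegral_indicator measurableSet_Icc]
          rw [show (volume.restrict (Icc (0:ℝ) 1)) = volume.restrict (Ioc (0:ℝ) 1) from
            (Measure.restrict_congr_set Ioc_ae_eq_Icc).symm]
          have hptw : ∀ y : ℝ, volume
              ({x : ℝ | (g:ℝ) * x + ((u 0 : ℝ) * y + s) ∈ A ∧
                (bb:ℝ) * x + ((v 0 : ℝ) * y + t) ∈ B} ∩ Ioc 0 1)
              = volume ({x : ℝ | (g:ℝ) * x + (u 0 : ℝ) * y + s ∈ A ∧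
                (bb:ℝ) * x + (v 0 : ℝ) * y + t ∈ B} ∩ Ioc 0 1) := by
            intro y
            congr 1
            ext x
            simp only [Set.mem_inter_iff, Set.mem_setOf_eq, add_assoc]
          rw [lintegral_congr hptw]
          have hdet : g * v 0 - bb * u 0 ≠ 0 := by
            intro h
            have hz : ∀ i, bb * u i = g * v i := by
              intro i
              induction i using Fin.cases with
              | zero =>
                have := sub_eq_zero.mp h
                omega
              | succ j =>
                rw [huw j, hvw j]
                ring
            exact hgne (hindep bb g hz).2
          exact lem2D hA hB hpA hpB s t g (u 0) bb (v 0) hdet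
/-- The set `S*_j ⊆ [0,1]^d` of `α` with `|𝐳_j · α − q| < 1/(2j+1)` for some integer `q`
all of whose common prime factors with `gcd 𝐳_j` exceed `4^k`. -/
def Sstar {d : ℕ} (z : ℕ → Fin d → ℤ) (k j : ℕ) : Set (Fin d → ℝ) :=
  {α | (∀ i, α i ∈ Set.Icc (0 : ℝ) 1) ∧ ∃ q : ℤ,
    |(∑ i, (z j i : ℝ) * α i) - (q : ℝ)| < 1 / (2 * (j : ℝ) + 1) ∧
    ∀ p : ℕ, p.Prime → (p : ℤ) ∣ q → (p : ℤ) ∣ Finset.univ.gcd (z j) → 4 ^ k < p}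

/-- The target set of `Sstar` membership, as a periodic subset of `ℝ`. -/
def AS (g : ℤ) (ε : ℝ) (k : ℕ) : Set ℝ :=
  {x : ℝ | ∃ q : ℤ, |(g:ℝ) * x - (q:ℝ)| < ε ∧
    ∀ p : ℕ, p.Prime → (p : ℤ) ∣ q → (p : ℤ) ∣ g → 4 ^ k < p}

lemma AS_meas (g : ℤ) (ε : ℝ) (k : ℕ) : MeasurableSet (AS g ε k) := by
  have : AS g ε k = ⋃ q : ℤ, {x : ℝ | |(g:ℝ) * x - (q:ℝ)| < ε ∧
      ∀ p : ℕ, p.Prime → (p : ℤ) ∣ q → (p : ℤ) ∣ g → 4 ^ k < p} := by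
    ext x
    simp only [AS, Set.mem_setOf_eq, Set.mem_iUnion]
  rw [this]
  apply MeasurableSet.iUnion
  intro q
  by_cases hq : ∀ p : ℕ, p.Prime → (p : ℤ) ∣ q → (p : ℤ) ∣ g → 4 ^ k < p
  · have : {x : ℝ | |(g:ℝ) * x - (q:ℝ)| < ε ∧
        ∀ p : ℕ, p.Prime → (p : ℤ) ∣ q → (p : ℤ) ∣ g → 4 ^ k < p}
        = (fun x : ℝ => |(g:ℝ) * x - (q:ℝ)|) ⁻¹' (Iio ε) := by
      ext x
      simp only [Set.mem_setOf_eq, Set.mem_preimage, Set.mem_Iio]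
      exact ⟨fun h => h.1, fun h => ⟨h, hq⟩⟩
    rw [this]
    exact measurableSet_Iio.preimage (((measurable_id.const_mul _).sub_const _).abs)
  · have : {x : ℝ | |(g:ℝ) * x - (q:ℝ)| < ε ∧
        ∀ p : ℕ, p.Prime → (p : ℤ) ∣ q → (p : ℤ) ∣ g → 4 ^ k < p} = ∅ := by
      ext x
      simp only [Set.mem_setOf_eq, Set.mem_empty_iff_false, iff_false]
      rintro ⟨-, h⟩
      exact hq h
    rw [this]
    exact MeasurableSet.empty

lemma AS_per (g : ℤ) (ε : ℝ) (k : ℕ) : PerS (AS g ε k) := by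
  intro x
  constructor
  · rintro ⟨q, h1, h2⟩
    refine ⟨q + g, ?_, ?_⟩
    · rw [show (g:ℝ) * (x + 1) - ((q + g : ℤ):ℝ) = (g:ℝ) * x - (q:ℝ) by push_cast; ring]
      exact h1
    · intro p hp hdq hdg
      exact h2 p hp (by
        have : (q : ℤ) = (q + g) - g := by ring
        rw [this]
        exact dvd_sub hdq hdg) hdg
  · rintro ⟨q, h1, h2⟩
    refine ⟨q - g, ?_, ?_⟩
    · rw [show (g:ℝ) * x - ((q - g : ℤ):ℝ) = (g:ℝ) * (x + 1) - (q:ℝ) by push_cast; ring]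
      exact h1
    · intro p hp hdq hdg
      exact h2 p hp (by
        have : (q : ℤ) = (q - g) + g := by ring
        rw [this]
        exact dvd_add hdq hdg) hdg

theorem stmt16 (d : ℕ) (hd : 1 ≤ d)
    (a : Fin d → ℕ → ℕ) (ha : ∀ i, StrictMono (a i)) (hapos : ∀ i n, 0 < a i n)
    (z : ℕ → Fin d → ℤ) (hzinj : Function.Injective z)
    (hz : ∀ N, (Finset.Icc 1 (diffSetVec a N).card).image z = diffSetVec a N)
    (k : ℕ) (hk : 1 ≤ k) (m n : ℕ) (hmn : m ≠ n)
    (hm1 : (2 : ℝ) ^ ((k : ℝ) / 2) < (m : ℝ)) (hm2 : m ≤ 2 ^ k)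
    (hn1 : (2 : ℝ) ^ ((k : ℝ) / 2) < (n : ℝ)) (hn2 : n ≤ 2 ^ k)
    (hpar1 : ¬ ∃ c : ℚ, ∀ i, (z n i : ℚ) = c * (z m i : ℚ))
    (hpar2 : ¬ ∃ c : ℚ, ∀ i, (z m i : ℚ) = c * (z n i : ℚ)) :
    volume (Sstar z k n ∩ Sstar z k m) = volume (Sstar z k n) * volume (Sstar z k m) := by
  classical
  -- nonvanishing of the two vectors
  have hzn : ∃ i, z n i ≠ 0 := by
    by_contra h
    push_neg at h
    exact hpar1 ⟨0, fun i => by rw [h i]; simp⟩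
  have hzm : ∃ i, z m i ≠ 0 := by
    by_contra h
    push_neg at h
    exact hpar2 ⟨0, fun i => by rw [h i]; simp⟩
  -- integral independence
  have hindep : ∀ p q : ℤ, (∀ i, p * z n i = q * z m i) → p = 0 ∧ q = 0 := by
    intro p q h
    have hp : p = 0 := by
      by_contra hp
      apply hpar1
      refine ⟨(q:ℚ) / (p:ℚ), fun i => ?_⟩
      have hQ : (p:ℚ) * (z n i : ℚ) = (q:ℚ) * (z m i : ℚ) := by exact_mod_cast h i
      have hpQ : (p:ℚ) ≠ 0 := by exact_mod_cast hp
      rw [div_mul_eq_mul_div, eq_div_iff hpQ]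
      linarith [hQ]
    refine ⟨hp, ?_⟩
    by_contra hq
    obtain ⟨i0, hi0⟩ := hzm
    have h1 := h i0
    rw [hp, zero_mul] at h1
    rcases mul_eq_zero.mp h1.symm with h2 | h2
    · exact hq h2
    · exact hi0 h2
  -- gcd normalization
  set g₁ : ℤ := Finset.univ.gcd (z n) with hg₁
  set g₂ : ℤ := Finset.univ.gcd (z m) with hg₂
  have hg₁dvd : ∀ i, g₁ ∣ z n i := fun i => Finset.gcd_dvd (Finset.mem_univ i)
  have hg₂dvd : ∀ i, g₂ ∣ z m i := fun i => Finset.gcd_dvd (Finset.mem_univ i)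
  have hg₁ne : g₁ ≠ 0 := by
    intro h
    obtain ⟨i0, hi0⟩ := hzn
    exact hi0 (Finset.gcd_eq_zero_iff.mp h i0 (Finset.mem_univ i0))
  have hg₂ne : g₂ ≠ 0 := by
    intro h
    obtain ⟨i0, hi0⟩ := hzm
    exact hi0 (Finset.gcd_eq_zero_iff.mp h i0 (Finset.mem_univ i0))
  set u₁ : Fin d → ℤ := fun i => z n i / g₁ with hu₁
  set v₁ : Fin d → ℤ := fun i => z m i / g₂ with hv₁
  have huw : ∀ i, z n i = g₁ * u₁ i := fun i => (Int.mul_ediv_cancel' (hg₁dvd i)).symm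
  have hvw : ∀ i, z m i = g₂ * v₁ i := fun i => (Int.mul_ediv_cancel' (hg₂dvd i)).symm
  have hu₁ne : ∃ i, u₁ i ≠ 0 := by
    obtain ⟨i0, hi0⟩ := hzn
    exact ⟨i0, fun h => hi0 (by rw [huw i0, h, mul_zero])⟩
  have hv₁ne : ∃ i, v₁ i ≠ 0 := by
    obtain ⟨i0, hi0⟩ := hzm
    exact ⟨i0, fun h => hi0 (by rw [hvw i0, h, mul_zero])⟩
  have hindep₁ : ∀ p q : ℤ, (∀ i, p * u₁ i = q * v₁ i) → p = 0 ∧ q = 0 := by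
    intro p q h
    have h2 : ∀ i, (p * g₂) * z n i = (q * g₁) * z m i := by
      intro i
      rw [huw i, hvw i]
      calc (p * g₂) * (g₁ * u₁ i) = (g₁ * g₂) * (p * u₁ i) := by ring
        _ = (g₁ * g₂) * (q * v₁ i) := by rw [h i]
        _ = (q * g₁) * (g₂ * v₁ i) := by ring
    have h3 := hindep (p * g₂) (q * g₁) h2
    constructor
    · rcases mul_eq_zero.mp h3.1 with h4 | h4
      · exact h4
      · exact absurd h4 hg₂ne
    · rcases mul_eq_zero.mp h3.2 with h4 | h4
      · exact h4
      · exact absurd h4 hg₁ne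
  -- rewrite the sets
  have hsumu : ∀ α : Fin d → ℝ, (∑ i, (z n i : ℝ) * α i)
      = (g₁:ℝ) * ((∑ i, (u₁ i : ℝ) * α i) + 0) := by
    intro α
    rw [add_zero, Finset.mul_sum]
    apply Finset.sum_congr rfl
    intro i _
    rw [huw i]
    push_cast
    ring
  have hsumv : ∀ α : Fin d → ℝ, (∑ i, (z m i : ℝ) * α i)
      = (g₂:ℝ) * ((∑ i, (v₁ i : ℝ) * α i) + 0) := by
    intro α
    rw [add_zero, Finset.mul_sum]
    apply Finset.sum_congr rfl
    intro i _
    rw [hvw i]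
    push_cast
    ring
  set A : Set ℝ := AS g₁ (1 / (2 * (n : ℝ) + 1)) k with hA
  set B : Set ℝ := AS g₂ (1 / (2 * (m : ℝ) + 1)) k with hB
  have hSn : Sstar z k n = {α : Fin d → ℝ | (∀ i, α i ∈ Icc (0:ℝ) 1) ∧
      (∑ i, (u₁ i : ℝ) * α i) + 0 ∈ A} := by
    ext α
    simp only [Sstar, Set.mem_setOf_eq, hA, AS]
    constructor
    · rintro ⟨hbox, q, h1, h2⟩
      refine ⟨hbox, q, ?_, h2⟩
      rw [← hsumu α]
      exact h1
    · rintro ⟨hbox, q, h1, h2⟩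
      refine ⟨hbox, q, ?_, h2⟩
      rw [hsumu α]
      exact h1
  have hSm : Sstar z k m = {α : Fin d → ℝ | (∀ i, α i ∈ Icc (0:ℝ) 1) ∧
      (∑ i, (v₁ i : ℝ) * α i) + 0 ∈ B} := by
    ext α
    simp only [Sstar, Set.mem_setOf_eq, hB, AS]
    constructor
    · rintro ⟨hbox, q, h1, h2⟩
      refine ⟨hbox, q, ?_, h2⟩
      rw [← hsumv α]
      exact h1
    · rintro ⟨hbox, q, h1, h2⟩
      refine ⟨hbox, q, ?_, h2⟩
      rw [hsumv α]
      exact h1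
  have hInter : Sstar z k n ∩ Sstar z k m = {α : Fin d → ℝ | (∀ i, α i ∈ Icc (0:ℝ) 1) ∧
      (∑ i, (u₁ i : ℝ) * α i) + 0 ∈ A ∧ (∑ i, (v₁ i : ℝ) * α i) + 0 ∈ B} := by
    rw [hSn, hSm]
    ext α
    simp only [Set.mem_inter_iff, Set.mem_setOf_eq]
    tauto
  have hAm : MeasurableSet A := AS_meas _ _ _
  have hBm : MeasurableSet B := AS_meas _ _ _
  have hAp : PerS A := AS_per _ _ _
  have hBp : PerS B := AS_per _ _ _
  rw [hInter, hSn, hSm,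
    vol_pair d u₁ v₁ hindep₁ 0 0 A B hAm hBm hAp hBp,
    vol_single d u₁ hu₁ne 0 A hAm hAp,
    vol_single d v₁ hv₁ne 0 B hBm hBp]
end
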